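/- arXiv:2506.03369 — 7 statements merged into one kernel-verified Lean document; each statement's English description precedes it below -/
import Mathlib

section
/- Let X be a nonnegative random variable with finite mean whose distribution has a Pareto tail with parameters (c, α), i.e., lim_{x→∞} P(X > x)/(c/x)^α = 1, where c > 0 and α > 1. Let X_{(n:n)} denote the maximum of n i.i.d. copies of X. Then lim_{n→∞} E[X_{(n:n)}] / (c · Γ(1 − 1/α) · n^{1/α}) = 1. -/
/-!
Write `G t = P(X > t)`. By independence `P(X_{(n:n)} > t) = 1 - (1 - G t)^n`, so the layer-cake
formula and the substitution `t = c n^{1/α} s` give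
`E[X_{(n:n)}] = c n^{1/α} ∫₀^∞ (1 - (1 - G (c n^{1/α} s))^n) ds`.
The Pareto tail gives `n G (c n^{1/α} s) → s^{-α}`, so the integrand tends to
`1 - exp (-s^{-α})`, and Bernoulli's inequality dominates it by `min 1 (2 s^{-α})`. Finally
`∫₀^∞ (1 - exp (-s^{-α})) ds = Γ(1 - 1/α)`: this is the layer-cake formula for `E^{-1/α}`
with `E` a standard exponential variable, since `P(E^{-1/α} > s) = 1 - exp (-s^{-α})`.
-/

open MeasureTheory ProbabilityTheory Filter Topology Set Real

lemma integral_Ioo_exp_neg {b : ℝ} (hb : 0 ≤ b) :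
    ∫ u in Ioo 0 b, exp (-u) = 1 - exp (-b) := by
  rw [← integral_Ioc_eq_integral_Ioo, ← intervalIntegral.integral_of_le hb,
    intervalIntegral.integral_comp_neg (fun x => exp x), integral_exp]
  simp

lemma setOf_lt_rpow_neg_inv_inter_Ioi {α s : ℝ} (hα : 0 < α) (hs : 0 < s) :
    {u : ℝ | s < u ^ (-α⁻¹)} ∩ Ioi 0 = Ioo 0 (s ^ (-α)) := by
  ext u
  simp only [mem_inter_iff, mem_ofPred_eq, mem_Ioi, mem_Ioo, and_comm (b := 0 < u)]
  refine and_congr_right fun hu => ?_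
  rw [← Real.lt_rpow_inv_iff_of_neg hs hu (neg_lt_zero.2 hα), inv_neg]

lemma lintegral_one_sub_exp_neg_rpow_neg {α : ℝ} (hα : 1 < α) :
    ∫⁻ s in Ioi 0, ENNReal.ofReal (1 - exp (-s ^ (-α))) =
      ENNReal.ofReal (Gamma (1 - α⁻¹)) := by
  have hα0 : 0 < α := by linarith
  have hΓarg : 0 < 1 - α⁻¹ := sub_pos.2 (inv_lt_one_of_one_lt₀ hα)
  set μ : Measure ℝ := (volume.restrict (Ioi 0)).withDensity fun u => ENNReal.ofReal (exp (-u))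
  have hdens : Measurable fun u : ℝ => ENNReal.ofReal (exp (-u)) := by fun_prop
  have hlayer := lintegral_eq_lintegral_meas_lt μ (f := fun u => u ^ (-α⁻¹)) ?_ (by fun_prop)
  · have hmeas_lt : ∀ s > (0 : ℝ),
        μ {u | s < u ^ (-α⁻¹)} = ENNReal.ofReal (1 - exp (-s ^ (-α))) := by
      intro s hs
      rw [withDensity_apply _ (measurableSet_lt measurable_const (by fun_prop)),
        Measure.restrict_restrict (measurableSet_lt measurable_const (by fun_prop)),
        setOf_lt_rpow_neg_inv_inter_Ioi hα0 hs,
        ← ofReal_integral_eq_lintegral_ofReal, integral_Ioo_exp_neg (by positivity)]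
      · exact (continuous_exp.comp continuous_neg).integrableOn_Icc.mono_set Ioo_subset_Icc_self
      · exact Eventually.of_forall fun u => (exp_pos _).le
    rw [← setLIntegral_congr_fun measurableSet_Ioi hmeas_lt, ← hlayer,
      lintegral_withDensity_eq_lintegral_mul _ hdens (by fun_prop), Gamma_eq_integral hΓarg,
      ofReal_integral_eq_lintegral_ofReal]
    · refine setLIntegral_congr_fun measurableSet_Ioi fun u hu => ?_
      rw [Pi.mul_apply, ← ENNReal.ofReal_mul (exp_pos _).le]
      ring_nf
    · exact GammaIntegral_convergent hΓarg
    · filter_upwards [ae_restrict_mem measurableSet_Ioi] with u hu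
      exact mul_nonneg (exp_pos _).le (rpow_nonneg (le_of_lt hu) _)
  · refine (withDensity_absolutelyContinuous _ _).ae_le ?_
    filter_upwards [ae_restrict_mem measurableSet_Ioi] with u hu
    exact rpow_nonneg (le_of_lt hu) _

lemma integral_one_sub_exp_neg_rpow_neg {α : ℝ} (hα : 1 < α) :
    ∫ s in Ioi 0, (1 - exp (-s ^ (-α))) = Gamma (1 - α⁻¹) := by
  have hΓarg : 0 < 1 - α⁻¹ := sub_pos.2 (inv_lt_one_of_one_lt₀ hα)
  rw [integral_eq_lintegral_of_nonneg_ae, lintegral_one_sub_exp_neg_rpow_neg hα,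
    ENNReal.toReal_ofReal (Gamma_pos_of_pos hΓarg).le]
  · filter_upwards [ae_restrict_mem measurableSet_Ioi] with s hs
    simp only [Pi.zero_apply, sub_nonneg, exp_le_one_iff, neg_nonpos]
    exact rpow_nonneg (le_of_lt hs) _
  · exact (by fun_prop : Measurable fun s : ℝ => 1 - exp (-s ^ (-α))).aestronglyMeasurable

lemma one_sub_one_sub_pow_le {g : ℝ} (hg : g ≤ 2) (n : ℕ) : 1 - (1 - g) ^ n ≤ n * g := by
  have := one_add_mul_le_pow (a := -g) (by linarith) n
  rw [← sub_eq_add_neg] at this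
  linarith

lemma div_mul_natCast_rpow_inv_mul_rpow {c α s : ℝ} (hc : 0 < c) (hα : 0 < α) {n : ℕ}
    (hn : 0 < n) (hs : 0 < s) : (c / (c * n ^ α⁻¹ * s)) ^ α = s ^ (-α) / n := by
  have hn' : (0 : ℝ) < n := by exact_mod_cast hn
  rw [mul_assoc, div_mul_cancel_left₀ hc.ne', inv_rpow (by positivity),
    mul_rpow (by positivity) hs.le, ← rpow_mul hn'.le, inv_mul_cancel₀ hα.ne', rpow_one,
    rpow_neg hs.le]
  field_simp

lemma integrableOn_min_one_mul_rpow_neg {α C : ℝ} (hα : 1 < α) (hC : 0 ≤ C) :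
    IntegrableOn (fun s : ℝ => min 1 (C * s ^ (-α))) (Ioi 0) := by
  have hmeas : Measurable fun s : ℝ => min 1 (C * s ^ (-α)) := by fun_prop
  have hnonneg : ∀ s ∈ Ioi (0 : ℝ), 0 ≤ min 1 (C * s ^ (-α)) := fun s hs =>
    le_min zero_le_one (mul_nonneg hC (rpow_nonneg (le_of_lt hs) _))
  rw [← Ioc_union_Ioi_eq_Ioi zero_le_one, integrableOn_union]
  constructor
  · refine (integrableOn_const (C := 1) measure_Ioc_lt_top.ne).mono'
      hmeas.aestronglyMeasurable ?_
    filter_upwards [ae_restrict_mem measurableSet_Ioc] with s hs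
    rw [norm_of_nonneg (hnonneg s hs.1)]
    exact min_le_left _ _
  · refine ((integrableOn_Ioi_rpow_of_lt (neg_lt_neg hα) one_pos).const_mul C).mono'
      hmeas.aestronglyMeasurable ?_
    filter_upwards [ae_restrict_mem measurableSet_Ioi] with s hs
    rw [norm_of_nonneg (hnonneg s (mem_Ioi.2 (one_pos.trans hs)))]
    exact min_le_right _ _

section ParetoTail

variable {G : ℝ → ℝ} {c α : ℝ}

lemma eventually_le_two_mul_of_tendsto_div (hc : 0 < c)
    (htail : Tendsto (fun x => G x / (c / x) ^ α) atTop (𝓝 1)) :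
    ∀ᶠ x in atTop, G x ≤ 2 * (c / x) ^ α := by
  filter_upwards [htail.eventually (eventually_le_nhds one_lt_two), eventually_gt_atTop 0]
    with x hx hx0
  rwa [div_le_iff₀ (by positivity)] at hx

lemma tendsto_natCast_mul_comp_mul_rpow_inv (hc : 0 < c) (hα : 0 < α)
    (htail : Tendsto (fun x => G x / (c / x) ^ α) atTop (𝓝 1)) {s : ℝ} (hs : 0 < s) :
    Tendsto (fun n : ℕ => n * G (c * n ^ α⁻¹ * s)) atTop (𝓝 (s ^ (-α))) := by
  have hscale : Tendsto (fun n : ℕ => c * n ^ α⁻¹ * s) atTop atTop :=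
    (((tendsto_rpow_atTop (inv_pos.2 hα)).comp tendsto_natCast_atTop_atTop).const_mul_atTop
      hc).atTop_mul_const hs
  have := (htail.comp hscale).mul_const (s ^ (-α))
  rw [one_mul] at this
  refine this.congr' ?_
  filter_upwards [eventually_gt_atTop 0] with n hn
  have hn' : (0 : ℝ) < n := by exact_mod_cast hn
  simp only [Function.comp_apply, div_mul_natCast_rpow_inv_mul_rpow hc hα hn hs]
  field_simp [(rpow_pos_of_pos hs (-α)).ne']

lemma eventually_norm_one_sub_one_sub_pow_le (hc : 0 < c) (hα : 0 < α) (hG0 : ∀ x, 0 ≤ G x)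
    (hG1 : ∀ x, G x ≤ 1) (htail : Tendsto (fun x => G x / (c / x) ^ α) atTop (𝓝 1)) :
    ∀ᶠ n : ℕ in atTop, ∀ s > 0,
      ‖1 - (1 - G (c * n ^ α⁻¹ * s)) ^ n‖ ≤ min 1 (2 * s ^ (-α)) := by
  obtain ⟨M, hM⟩ := (eventually_le_two_mul_of_tendsto_div hc htail).exists_forall_of_atTop
  have hscale : Tendsto (fun n : ℕ => c * n ^ α⁻¹) atTop atTop :=
    ((tendsto_rpow_atTop (inv_pos.2 hα)).comp tendsto_natCast_atTop_atTop).const_mul_atTop hc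
  filter_upwards [hscale.eventually_ge_atTop M, eventually_gt_atTop 0] with n hMn hn s hs
  set g := G (c * n ^ α⁻¹ * s)
  have hpow0 : 0 ≤ (1 - g) ^ n := pow_nonneg (sub_nonneg.2 (hG1 _)) n
  have hpow1 : (1 - g) ^ n ≤ 1 :=
    pow_le_one₀ (sub_nonneg.2 (hG1 _)) (by linarith [hG0 (c * n ^ α⁻¹ * s)])
  rw [norm_of_nonneg (sub_nonneg.2 hpow1)]
  refine le_min (by linarith) ?_
  rcases le_or_gt s 1 with hs1 | hs1
  · have := one_le_rpow_of_pos_of_le_one_of_nonpos hs hs1 (neg_nonpos.2 hα.le)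
    linarith
  · have hn' : (0 : ℝ) < n := by exact_mod_cast hn
    have hg : g ≤ 2 * (s ^ (-α) / n) := by
      rw [← div_mul_natCast_rpow_inv_mul_rpow hc hα hn hs]
      exact hM _ (hMn.trans (le_mul_of_one_le_right (by positivity) hs1.le))
    calc 1 - (1 - g) ^ n ≤ n * g :=
          one_sub_one_sub_pow_le (by linarith [hG1 (c * n ^ α⁻¹ * s)]) n
      _ ≤ n * (2 * (s ^ (-α) / n)) := by gcongr
      _ = 2 * s ^ (-α) := by field_simp

lemma tendsto_integral_one_sub_one_sub_pow (hc : 0 < c) (hα : 1 < α) (hGmeas : Measurable G)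
    (hG0 : ∀ x, 0 ≤ G x) (hG1 : ∀ x, G x ≤ 1)
    (htail : Tendsto (fun x => G x / (c / x) ^ α) atTop (𝓝 1)) :
    Tendsto (fun n : ℕ => ∫ s in Ioi 0, (1 - (1 - G (c * n ^ α⁻¹ * s)) ^ n)) atTop
      (𝓝 (Gamma (1 - α⁻¹))) := by
  have hα0 : 0 < α := by linarith
  rw [← integral_one_sub_exp_neg_rpow_neg hα]
  refine tendsto_integral_filter_of_dominated_convergence _
    (Eventually.of_forall fun n => (by fun_prop : Measurable _).aestronglyMeasurable) ?_
    (integrableOn_min_one_mul_rpow_neg hα zero_le_two) ?_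
  · filter_upwards [eventually_norm_one_sub_one_sub_pow_le hc hα0 hG0 hG1 htail] with n hn
    filter_upwards [ae_restrict_mem measurableSet_Ioi] with s hs using hn s hs
  · filter_upwards [ae_restrict_mem measurableSet_Ioi] with s hs
    have hlim := (tendsto_natCast_mul_comp_mul_rpow_inv hc hα0 htail hs).neg
    simp only [← mul_neg] at hlim
    have := Real.tendsto_one_add_pow_exp_of_tendsto hlim
    simp only [← sub_eq_add_neg] at this
    exact this.const_sub 1

end ParetoTail

section Maximum

variable {Ω : Type*} {mΩ : MeasurableSpace Ω} {μ : Measure Ω} {X : ℕ → Ω → ℝ}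

lemma setOf_iSup_fin_le {n : ℕ} {t : ℝ} (ht : 0 ≤ t) :
    {ω | ⨆ i : Fin n, X i ω ≤ t} = ⋂ i ∈ Finset.range n, X i ⁻¹' Iic t := by
  ext ω
  simp only [mem_ofPred_eq, mem_iInter, mem_preimage, mem_Iic, Finset.mem_range]
  exact ⟨fun h i hi => (le_ciSup (Finite.bddAbove_range _) (⟨i, hi⟩ : Fin n)).trans h,
    fun h => Real.iSup_le (fun i => h i i.2) ht⟩

lemma measureReal_lt_iSup_fin [IsProbabilityMeasure μ] (hmeas : ∀ i, Measurable (X i))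
    (hindep : iIndepFun X μ) (hident : ∀ i, IdentDistrib (X i) (X 0) μ μ) (n : ℕ) {t : ℝ}
    (ht : 0 ≤ t) :
    μ.real {ω | t < ⨆ i : Fin n, X i ω} = 1 - (1 - μ.real {ω | t < X 0 ω}) ^ n := by
  have hcompl : {ω | t < ⨆ i : Fin n, X i ω} = {ω | ⨆ i : Fin n, X i ω ≤ t}ᶜ := by
    ext; simp
  have hfactor : ∀ i, μ.real (X i ⁻¹' Iic t) = 1 - μ.real {ω | t < X 0 ω} := fun i => by
    rw [measureReal_def, (hident i).measure_mem_eq measurableSet_Iic, ← measureReal_def,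
      ← probReal_compl_eq_one_sub (measurableSet_lt measurable_const (hmeas 0))]
    congr 1; ext; simp
  rw [hcompl, probReal_compl_eq_one_sub (measurableSet_le (by fun_prop) measurable_const),
    setOf_iSup_fin_le ht, measureReal_def,
    hindep.measure_inter_preimage_eq_mul _ fun _ _ => measurableSet_Iic, ENNReal.toReal_prod]
  simp only [← measureReal_def, hfactor, Finset.prod_const, Finset.card_range]

lemma integrable_iSup_fin (hmeas : ∀ i, Measurable (X i)) (hnonneg : ∀ i ω, 0 ≤ X i ω)
    (hint : ∀ i, Integrable (X i) μ) (n : ℕ) :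
    Integrable (fun ω => ⨆ i : Fin n, X i ω) μ := by
  refine (integrable_finsetSum Finset.univ fun (i : Fin n) _ => hint i).mono'
    (Measurable.iSup fun i : Fin n => hmeas i).aestronglyMeasurable
    (Eventually.of_forall fun ω => ?_)
  rw [norm_of_nonneg (Real.iSup_nonneg fun i : Fin n => hnonneg i ω)]
  exact Real.iSup_le
    (fun i => Finset.single_le_sum (fun (j : Fin n) _ => hnonneg j ω) (Finset.mem_univ i))
    (Finset.sum_nonneg fun j _ => hnonneg j ω)

lemma integral_iSup_fin_eq [IsProbabilityMeasure μ] (hmeas : ∀ i, Measurable (X i))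
    (hnonneg : ∀ i ω, 0 ≤ X i ω) (hint : Integrable (X 0) μ) (hindep : iIndepFun X μ)
    (hident : ∀ i, IdentDistrib (X i) (X 0) μ μ) (n : ℕ) :
    ∫ ω, ⨆ i : Fin n, X i ω ∂μ =
      ∫ t in Ioi 0, (1 - (1 - μ.real {ω | t < X 0 ω}) ^ n) := by
  have hmax_int := integrable_iSup_fin hmeas hnonneg (fun i => (hident i).integrable_iff.2 hint) n
  rw [hmax_int.integral_eq_integral_meas_lt
    (Eventually.of_forall fun ω => Real.iSup_nonneg fun i => hnonneg i ω)]
  exact setIntegral_congr_fun measurableSet_Ioi fun t ht =>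
    measureReal_lt_iSup_fin hmeas hindep hident n (le_of_lt ht)

end Maximum

/-- If `X` is a nonnegative random variable with finite mean whose
distribution has a Pareto tail with parameters `(c, α)`, and `X_{(n:n)}` denotes the
maximum of `n` i.i.d. copies of `X`, then
`E[X_{(n:n)}] / (c · Γ(1 − 1/α) · n^{1/α}) → 1` as `n → ∞`. -/
theorem expected_maximum_pareto_tail
    {Ω : Type*} [MeasureSpace Ω] [IsProbabilityMeasure (ℙ : Measure Ω)]
    (c α : ℝ) (hc : 0 < c) (hα : 1 < α)
    (X : ℕ → Ω → ℝ) (hmeas : ∀ i, Measurable (X i))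
    (hnonneg : ∀ i ω, 0 ≤ X i ω)
    (hint : Integrable (X 0) ℙ)
    (hindep : iIndepFun X ℙ)
    (hident : ∀ i, IdentDistrib (X i) (X 0) ℙ ℙ)
    (htail : Tendsto (fun x : ℝ => (ℙ {ω | X 0 ω > x}).toReal / (c / x) ^ α)
      atTop (𝓝 1)) :
    Tendsto (fun n : ℕ =>
        (∫ ω, ⨆ i : Fin n, X (i : ℕ) ω) /
          (c * Real.Gamma (1 - 1 / α) * (n : ℝ) ^ (1 / α)))
      atTop (𝓝 1) := by
  set G : ℝ → ℝ := fun t => (ℙ : Measure Ω).real {ω | t < X 0 ω}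
  have hGanti : Antitone G := fun s t hst =>
    measureReal_mono fun ω (hω : t < X 0 ω) => hst.trans_lt hω
  have hΓ : 0 < Gamma (1 - α⁻¹) := Gamma_pos_of_pos (sub_pos.2 (inv_lt_one_of_one_lt₀ hα))
  have hlim := (tendsto_integral_one_sub_one_sub_pow hc hα hGanti.measurable
    (fun _ => measureReal_nonneg) (fun _ => measureReal_le_one) htail).div_const
    (Gamma (1 - α⁻¹))
  rw [div_self hΓ.ne'] at hlim
  refine hlim.congr' ?_
  filter_upwards [eventually_gt_atTop 0] with n hn
  have hscale : 0 < c * (n : ℝ) ^ α⁻¹ := by positivity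
  have hmax : ∫ ω, ⨆ i : Fin n, X i ω =
      c * n ^ α⁻¹ * ∫ s in Ioi 0, (1 - (1 - G (c * n ^ α⁻¹ * s)) ^ n) := by
    rw [integral_iSup_fin_eq hmeas hnonneg hint hindep hident n,
      integral_comp_mul_left_Ioi (fun t => 1 - (1 - G t) ^ n) 0 hscale, mul_zero, smul_eq_mul,
      mul_inv_cancel_left₀ hscale.ne']
  rw [hmax, one_div]
  field_simp
end

section
/- Fix ρ ∈ (0,1). Let X and Y be independent nonnegative random variables with finite means, where X has a Pareto tail with parameters (c_X, α_X) and Y has a Pareto tail with parameters (c_Y, α_Y), with α_X < α_Y. Then Z = (1−ρ)X + ρY has a Pareto tail with parameters ((1−ρ)c_X, α_X). -/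
/-!
The lower bound is immediate: on `{X > t/(1-ρ)}` the combination exceeds `t` since
`Y ≥ 0`. For the upper bound fix `θ ∈ (0,1)`: if `(1-ρ)X + ρY > t` then `(1-ρ)X > θt` or
`ρY > (1-θ)t`. Measured against `((1-ρ)c_X/t)^α_X`, the first tail tends to `θ^(-α_X)` and
the second, being a Pareto tail of larger index, to `0`. Letting `θ → 1` gives the upper bound.
-/

open MeasureTheory ProbabilityTheory Filter Topology

/-- `F` plays the role of the tail function `x ↦ P(Z > x)`. -/
def HasParetoTail (F : ℝ → ℝ) (c α : ℝ) : Prop :=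
  Tendsto (fun x => F x / (c / x) ^ α) atTop (𝓝 1)

namespace HasParetoTail

variable {F : ℝ → ℝ} {c α : ℝ}

theorem comp_div (h : HasParetoTail F c α) {k : ℝ} (hk : 0 < k) :
    HasParetoTail (fun x => F (x / k)) (k * c) α := by
  refine (h.comp (tendsto_id.atTop_div_const hk)).congr' ?_
  filter_upwards [eventually_gt_atTop 0] with x hx
  simp only [Function.comp_apply, id]
  rw [div_div_eq_mul_div, mul_comm c k]

theorem tendsto_div_of_tendsto (h : HasParetoTail F c α) (hc : 0 < c) {g : ℝ → ℝ} {L : ℝ}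
    (hg : Tendsto (fun x => (c / x) ^ α / g x) atTop (𝓝 L)) :
    Tendsto (fun x => F x / g x) atTop (𝓝 L) := by
  refine (one_mul L ▸ h.mul hg).congr' ?_
  filter_upwards [eventually_gt_atTop 0] with x hx
  exact div_mul_div_cancel₀ (Real.rpow_pos_of_pos (div_pos hc hx) α).ne'

theorem tendsto_div_rpow (h : HasParetoTail F c α) (hc : 0 < c) {c' : ℝ} (hc' : 0 < c') :
    Tendsto (fun x => F x / (c' / x) ^ α) atTop (𝓝 ((c / c') ^ α)) := by
  refine h.tendsto_div_of_tendsto hc (tendsto_const_nhds.congr' ?_)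
  filter_upwards [eventually_gt_atTop 0] with x hx
  rw [← Real.div_rpow (div_pos hc hx).le (div_pos hc' hx).le, div_div_div_cancel_right₀ hx.ne']

theorem tendsto_div_rpow_of_lt (h : HasParetoTail F c α) (hc : 0 < c) {c' β : ℝ}
    (hc' : 0 < c') (hβ : β < α) :
    Tendsto (fun x => F x / (c' / x) ^ β) atTop (𝓝 0) := by
  have hpow : Tendsto (fun x : ℝ => c ^ α / c' ^ β * x ^ (-(α - β))) atTop (𝓝 0) := by
    simpa using (tendsto_rpow_neg_atTop (sub_pos.2 hβ)).const_mul (c ^ α / c' ^ β)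
  refine h.tendsto_div_of_tendsto hc (hpow.congr' ?_)
  filter_upwards [eventually_gt_atTop 0] with x hx
  rw [Real.div_rpow hc.le hx.le, Real.div_rpow hc'.le hx.le, Real.rpow_neg hx.le,
    Real.rpow_sub hx]
  have := Real.rpow_pos_of_pos hx α
  have := Real.rpow_pos_of_pos hx β
  have := Real.rpow_pos_of_pos hc' β
  field_simp

end HasParetoTail

theorem tendsto_of_le_of_forall_le_tendsto {β ι : Type*} {l : Filter β} {p : Filter ι}
    [p.NeBot] {f g : β → ℝ} {h : ι → β → ℝ} {L : ι → ℝ} {a : ℝ}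
    (hg : Tendsto g l (𝓝 a)) (hgf : g ≤ᶠ[l] f) (hL : Tendsto L p (𝓝 a))
    (hfh : ∀ᶠ i in p, f ≤ᶠ[l] h i ∧ Tendsto (h i) l (𝓝 (L i))) :
    Tendsto f l (𝓝 a) := by
  refine tendsto_order.2 ⟨fun b hb => ?_, fun b hb => ?_⟩
  · filter_upwards [hg.eventually (lt_mem_nhds hb), hgf] with x hbx hgx
    exact hbx.trans_le hgx
  · obtain ⟨i, hfi, hi⟩ := (hfh.and (hL.eventually (gt_mem_nhds hb))).exists
    filter_upwards [hfi.1, hfi.2.eventually (gt_mem_nhds hi)] with x hfx hhx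
    exact hfx.trans_lt hhx

section

variable {Ω : Type*} {X Y : Ω → ℝ} {a b t : ℝ}

theorem setOf_div_lt_subset_setOf_lt_add (ha : 0 < a) (hb : 0 ≤ b) (hY : ∀ ω, 0 ≤ Y ω) :
    {ω | t / a < X ω} ⊆ {ω | t < a * X ω + b * Y ω} := fun ω hω => by
  have := mul_nonneg hb (hY ω)
  have := (div_lt_iff₀' ha).1 hω
  simp only [Set.mem_ofPred_eq]
  linarith

theorem setOf_lt_add_subset_union {θ : ℝ} (ha : 0 < a) (hb : 0 < b) (hθ : θ ∈ Set.Ioo 0 1) :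
    {ω | t < a * X ω + b * Y ω} ⊆
      {ω | t / (a / θ) < X ω} ∪ {ω | t / (b / (1 - θ)) < Y ω} := by
  intro ω hω
  by_contra! hcon
  simp only [Set.mem_union, Set.mem_ofPred_eq, not_or, not_lt] at hω hcon
  obtain ⟨hθ0, hθ1⟩ := hθ
  have h1θ : 0 < 1 - θ := sub_pos.2 hθ1
  have hX : a * X ω ≤ θ * t := by
    have := (le_div_iff₀ (div_pos ha hθ0)).1 hcon.1
    field_simp at this
    linarith
  have hY : b * Y ω ≤ (1 - θ) * t := by
    have := (le_div_iff₀ (div_pos hb h1θ)).1 hcon.2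
    field_simp at this
    linarith
  linarith

end

theorem pareto_tail_convex_combination_lighter_general
    {Ω : Type*} [MeasureSpace Ω] [IsProbabilityMeasure (ℙ : Measure Ω)]
    (ρ : ℝ) (hρ : ρ ∈ Set.Ioo (0 : ℝ) 1)
    (cX αX cY αY : ℝ) (hcX : 0 < cX) (hcY : 0 < cY)
    (hαXY : αX < αY)
    (X Y : Ω → ℝ)
    (hYnonneg : ∀ ω, 0 ≤ Y ω)
    (hXtail : Tendsto (fun x : ℝ => (ℙ {ω | X ω > x}).toReal / (cX / x) ^ αX)
      atTop (𝓝 1))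
    (hYtail : Tendsto (fun x : ℝ => (ℙ {ω | Y ω > x}).toReal / (cY / x) ^ αY)
      atTop (𝓝 1)) :
    Tendsto (fun t : ℝ =>
        (ℙ {ω | (1 - ρ) * X ω + ρ * Y ω > t}).toReal / ((1 - ρ) * cX / t) ^ αX)
      atTop (𝓝 1) := by
  obtain ⟨hρ0, hρ1⟩ := hρ
  have hX : HasParetoTail (fun x => (ℙ : Measure Ω).real {ω | x < X ω}) cX αX := hXtail
  have hY : HasParetoTail (fun x => (ℙ : Measure Ω).real {ω | x < Y ω}) cY αY := hYtail
  have h1ρ : 0 < 1 - ρ := sub_pos.2 hρ1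
  have hcZ : 0 < (1 - ρ) * cX := mul_pos h1ρ hcX
  have hinv : Tendsto (fun θ : ℝ => θ⁻¹ ^ αX) (𝓝[<] 1) (𝓝 1) := by
    have := (continuousAt_inv₀ one_ne_zero).rpow_const (p := αX)
      (Or.inl (inv_ne_zero one_ne_zero))
    simpa using this.tendsto.mono_left nhdsWithin_le_nhds
  refine tendsto_of_le_of_forall_le_tendsto (hX.comp_div h1ρ) ?_ hinv
    (h := fun θ t => ((ℙ : Measure Ω).real {ω | t / ((1 - ρ) / θ) < X ω}
      + (ℙ : Measure Ω).real {ω | t / (ρ / (1 - θ)) < Y ω}) / ((1 - ρ) * cX / t) ^ αX) ?_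
  · filter_upwards [eventually_gt_atTop 0] with t ht
    gcongr
    exact measureReal_mono (setOf_div_lt_subset_setOf_lt_add h1ρ hρ0.le hYnonneg)
  · filter_upwards [Ioo_mem_nhdsLT zero_lt_one] with θ hθ
    have h1θ : 0 < 1 - θ := sub_pos.2 hθ.2
    refine ⟨?_, ?_⟩
    · filter_upwards [eventually_gt_atTop 0] with t ht
      gcongr
      exact (measureReal_mono (setOf_lt_add_subset_union h1ρ hρ0 hθ)).trans
        (measureReal_union_le _ _)
    · have hXθ := (hX.comp_div (div_pos h1ρ hθ.1)).tendsto_div_rpow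
        (mul_pos (div_pos h1ρ hθ.1) hcX) hcZ
      have hYθ := (hY.comp_div (div_pos hρ0 h1θ)).tendsto_div_rpow_of_lt
        (mul_pos (div_pos hρ0 h1θ) hcY) hcZ hαXY
      have hratio : (1 - ρ) / θ * cX / ((1 - ρ) * cX) = θ⁻¹ := by
        field_simp
      simpa [hratio, add_div] using hXθ.add hYθ

/-- Fix `ρ ∈ (0,1)`. If `X` and `Y` are independent nonnegative random
variables with finite means, `X` with Pareto tail `(c_X, α_X)` and `Y` with Pareto tail
`(c_Y, α_Y)`, where `α_X < α_Y`, then `Z = (1−ρ)X + ρY` has a Pareto tail with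
parameters `((1−ρ)c_X, α_X)`. -/
theorem pareto_tail_convex_combination_lighter
    {Ω : Type*} [MeasureSpace Ω] [IsProbabilityMeasure (ℙ : Measure Ω)]
    (ρ : ℝ) (hρ : ρ ∈ Set.Ioo (0 : ℝ) 1)
    (cX αX cY αY : ℝ) (hcX : 0 < cX) (hαX : 1 < αX) (hcY : 0 < cY) (hαY : 1 < αY)
    (hαXY : αX < αY)
    (X Y : Ω → ℝ) (hXmeas : Measurable X) (hYmeas : Measurable Y)
    (hXnonneg : ∀ ω, 0 ≤ X ω) (hYnonneg : ∀ ω, 0 ≤ Y ω)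
    (hXint : Integrable X ℙ) (hYint : Integrable Y ℙ)
    (hindep : IndepFun X Y ℙ)
    (hXtail : Tendsto (fun x : ℝ => (ℙ {ω | X ω > x}).toReal / (cX / x) ^ αX)
      atTop (𝓝 1))
    (hYtail : Tendsto (fun x : ℝ => (ℙ {ω | Y ω > x}).toReal / (cY / x) ^ αY)
      atTop (𝓝 1)) :
    Tendsto (fun t : ℝ =>
        (ℙ {ω | (1 - ρ) * X ω + ρ * Y ω > t}).toReal / ((1 - ρ) * cX / t) ^ αX)
      atTop (𝓝 1) :=
  pareto_tail_convex_combination_lighter_general ρ hρ cX αX cY αY hcX hcY hαXY X Y hYnonneg hXtail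
    hYtail
end

section
/- Fix ρ ∈ (0,1) and α > 1. Let X and Y be independent nonnegative random variables with finite means, each having a Pareto tail with the same exponent α and scale parameters c_X and c_Y respectively. Then Z = (1−ρ)X + ρY has a Pareto tail with parameters (c_Z, α) where c_Z = (((1−ρ)c_X)^α + (ρ c_Y)^α)^{1/α}. -/
/-!
For nonnegative independent `U`, `V` and any `δ ∈ (0, 1)`,
`{U > t} ∪ {V > t} ⊆ {U + V > t} ⊆ {U > (1-δ)t} ∪ {V > (1-δ)t} ∪ ({U > δt} ∩ {V > δt})`.
By independence the last event has probability `P(U > δt) P(V > δt) = O(t^{-2α})`, so if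
`t^α P(U > t) → a` and `t^α P(V > t) → b`, then `t^α P(U + V > t)` is eventually squeezed between
`a + b - ε` and `(a + b) / (1-δ)^α + ε`; letting `δ → 0` gives `t^α P(U + V > t) → a + b`.
Since `P(rX > t) = P(X > t/r)`, the summands `(1-ρ)X` and `ρY` have tail constants
`((1-ρ)c_X)^α` and `(ρ c_Y)^α`, whose sum is `c_Z^α`.
-/

open MeasureTheory ProbabilityTheory Filter Topology

section PowerTail

variable {f g h : ℝ → ℝ} {α a b c : ℝ}

theorem tendsto_div_div_rpow_iff (hc : 0 < c) :
    Tendsto (fun x => f x / (c / x) ^ α) atTop (𝓝 1) ↔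
      Tendsto (fun x => f x * x ^ α) atTop (𝓝 (c ^ α)) := by
  have hcα : c ^ α ≠ 0 := (Real.rpow_pos_of_pos hc α).ne'
  have hEq : (fun x => f x / (c / x) ^ α) =ᶠ[atTop] fun x => f x * x ^ α / c ^ α := by
    filter_upwards [eventually_gt_atTop 0] with x hx
    rw [Real.div_rpow hc.le hx.le, div_div_eq_mul_div]
  rw [tendsto_congr' hEq]
  exact ⟨fun h1 => by simpa [hcα] using h1.mul_const (c ^ α),
    fun h1 => by simpa [hcα] using h1.div_const (c ^ α)⟩

theorem Filter.Tendsto.comp_const_mul_mul_rpow (hf : Tendsto (fun t => f t * t ^ α) atTop (𝓝 a))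
    {r : ℝ} (hr : 0 < r) :
    Tendsto (fun t => f (r * t) * t ^ α) atTop (𝓝 (a / r ^ α)) := by
  refine ((hf.comp (tendsto_id.const_mul_atTop hr)).div_const (r ^ α)).congr' ?_
  filter_upwards [eventually_gt_atTop 0] with t ht
  have hrα : r ^ α ≠ 0 := (Real.rpow_pos_of_pos hr α).ne'
  simp only [Function.comp_apply, id, Real.mul_rpow hr.le ht.le]
  field_simp

theorem tendsto_mul_mul_rpow_zero (hα : 0 < α) (hf : Tendsto (fun t => f t * t ^ α) atTop (𝓝 a))
    (hg : Tendsto (fun t => g t * t ^ α) atTop (𝓝 b)) :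
    Tendsto (fun t => f t * g t * t ^ α) atTop (𝓝 0) := by
  have hinv : Tendsto (fun t : ℝ => (t ^ α)⁻¹) atTop (𝓝 0) :=
    (tendsto_rpow_atTop hα).inv_tendsto_atTop
  refine (by simpa using (hf.mul hg).mul hinv :
    Tendsto (fun t => f t * t ^ α * (g t * t ^ α) * (t ^ α)⁻¹) atTop (𝓝 0)).congr' ?_
  filter_upwards [eventually_gt_atTop 0] with t ht
  have htα : t ^ α ≠ 0 := (Real.rpow_pos_of_pos ht α).ne'
  field_simp

theorem eventually_lt_mul_rpow_of_le (hα : 0 < α)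
    (hf : Tendsto (fun t => f t * t ^ α) atTop (𝓝 a))
    (hg : Tendsto (fun t => g t * t ^ α) atTop (𝓝 b))
    (hlower : ∀ t, f t + g t - f t * g t ≤ h t) (hc : c < a + b) :
    ∀ᶠ t in atTop, c < h t * t ^ α := by
  have hlim : Tendsto (fun t => (f t + g t - f t * g t) * t ^ α) atTop (𝓝 (a + b)) := by
    simpa [add_mul, sub_mul] using (hf.add hg).sub (tendsto_mul_mul_rpow_zero hα hf hg)
  filter_upwards [hlim.eventually (eventually_gt_nhds hc), eventually_gt_atTop 0] with t hct ht
  exact hct.trans_le (mul_le_mul_of_nonneg_right (hlower t) (Real.rpow_nonneg ht.le α))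

theorem exists_div_one_sub_rpow_lt (hc : a < c) : ∃ δ ∈ Set.Ioo (0 : ℝ) 1, a / (1 - δ) ^ α < c := by
  have hcont : ContinuousAt (fun δ : ℝ => a / (1 - δ) ^ α) 0 :=
    continuousAt_const.div ((continuousAt_const.sub continuousAt_id).rpow_const (by simp))
      (by simp)
  have hlt : ∀ᶠ δ in 𝓝 (0 : ℝ), a / (1 - δ) ^ α < c :=
    hcont.eventually (eventually_lt_nhds (by simpa using hc))
  obtain ⟨δ, hδc, hδ⟩ :=
    ((hlt.filter_mono nhdsWithin_le_nhds).and (Ioo_mem_nhdsGT (zero_lt_one' ℝ))).exists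
  exact ⟨δ, hδ, hδc⟩

theorem eventually_mul_rpow_lt_of_le (hα : 0 < α)
    (hf : Tendsto (fun t => f t * t ^ α) atTop (𝓝 a))
    (hg : Tendsto (fun t => g t * t ^ α) atTop (𝓝 b))
    (hupper : ∀ δ ∈ Set.Ioo (0 : ℝ) 1, ∀ t,
      h t ≤ f ((1 - δ) * t) + g ((1 - δ) * t) + f (δ * t) * g (δ * t))
    (hc : a + b < c) :
    ∀ᶠ t in atTop, h t * t ^ α < c := by
  obtain ⟨δ, hδ, hδc⟩ := exists_div_one_sub_rpow_lt (α := α) hc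
  have h1δ : 0 < 1 - δ := sub_pos.2 hδ.2
  have hjoint : Tendsto (fun t => f (δ * t) * g (δ * t) * t ^ α) atTop (𝓝 0) := by
    simpa using (tendsto_mul_mul_rpow_zero hα hf hg).comp_const_mul_mul_rpow hδ.1
  have hlim : Tendsto (fun t => (f ((1 - δ) * t) + g ((1 - δ) * t) + f (δ * t) * g (δ * t)) * t ^ α)
      atTop (𝓝 ((a + b) / (1 - δ) ^ α)) := by
    simpa [add_mul, add_div] using
      ((hf.comp_const_mul_mul_rpow h1δ).add (hg.comp_const_mul_mul_rpow h1δ)).add hjoint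
  filter_upwards [hlim.eventually (eventually_lt_nhds hδc), eventually_gt_atTop 0] with t hct ht
  exact (mul_le_mul_of_nonneg_right (hupper δ hδ t) (Real.rpow_nonneg ht.le α)).trans_lt hct

theorem tendsto_mul_rpow_add_of_le_of_le (hα : 0 < α)
    (hf : Tendsto (fun t => f t * t ^ α) atTop (𝓝 a))
    (hg : Tendsto (fun t => g t * t ^ α) atTop (𝓝 b))
    (hlower : ∀ t, f t + g t - f t * g t ≤ h t)
    (hupper : ∀ δ ∈ Set.Ioo (0 : ℝ) 1, ∀ t,
      h t ≤ f ((1 - δ) * t) + g ((1 - δ) * t) + f (δ * t) * g (δ * t)) :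
    Tendsto (fun t => h t * t ^ α) atTop (𝓝 (a + b)) :=
  tendsto_order.2 ⟨fun _ hc => eventually_lt_mul_rpow_of_le hα hf hg hlower hc,
    fun _ hc => eventually_mul_rpow_lt_of_le hα hf hg hupper hc⟩

end PowerTail

section TailProbability

variable {Ω : Type*} [MeasurableSpace Ω] {μ : Measure Ω} {U V X : Ω → ℝ} {α a b : ℝ}

noncomputable def tailProb (μ : Measure Ω) (X : Ω → ℝ) (t : ℝ) : ℝ := μ.real {ω | X ω > t}

theorem tailProb_const_mul {r : ℝ} (hr : 0 < r) (t : ℝ) :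
    tailProb μ (fun ω => r * X ω) t = tailProb μ X (r⁻¹ * t) := by
  simp only [tailProb, gt_iff_lt, ← div_eq_inv_mul, div_lt_iff₀' hr]

theorem tendsto_tailProb_const_mul_mul_rpow
    (hX : Tendsto (fun t => tailProb μ X t * t ^ α) atTop (𝓝 a)) {r : ℝ} (hr : 0 < r) :
    Tendsto (fun t => tailProb μ (fun ω => r * X ω) t * t ^ α) atTop (𝓝 (a * r ^ α)) := by
  simpa [tailProb_const_mul hr, Real.inv_rpow hr.le] using hX.comp_const_mul_mul_rpow (inv_pos.2 hr)

theorem ProbabilityTheory.IndepFun.measureReal_inter_eq_tailProb_mul (hind : IndepFun U V μ)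
    (s t : ℝ) : μ.real ({ω | U ω > s} ∩ {ω | V ω > t}) = tailProb μ U s * tailProb μ V t := by
  simp only [tailProb, measureReal_def, ← ENNReal.toReal_mul]
  exact congrArg ENNReal.toReal
    (hind.measure_inter_preimage_eq_mul _ _ measurableSet_Ioi measurableSet_Ioi)

variable [IsFiniteMeasure μ]

theorem le_tailProb_add (hU0 : ∀ ω, 0 ≤ U ω) (hV0 : ∀ ω, 0 ≤ V ω) (hV : AEMeasurable V μ)
    (hind : IndepFun U V μ) (t : ℝ) :
    tailProb μ U t + tailProb μ V t - tailProb μ U t * tailProb μ V t ≤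
      tailProb μ (fun ω => U ω + V ω) t := by
  have hsub : {ω | U ω > t} ∪ {ω | V ω > t} ⊆ {ω | U ω + V ω > t} := by
    rintro ω (hω | hω)
    · exact lt_add_of_lt_of_nonneg hω (hV0 ω)
    · exact lt_add_of_nonneg_of_lt (hU0 ω) hω
  have hunion : μ.real ({ω | U ω > t} ∪ {ω | V ω > t}) + tailProb μ U t * tailProb μ V t =
      tailProb μ U t + tailProb μ V t := by
    rw [← hind.measureReal_inter_eq_tailProb_mul]
    exact measureReal_union_add_inter₀ (hV.nullMeasurableSet_preimage measurableSet_Ioi)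
  have hmono : μ.real ({ω | U ω > t} ∪ {ω | V ω > t}) ≤ tailProb μ (fun ω => U ω + V ω) t :=
    measureReal_mono hsub
  linarith

theorem tailProb_add_le (hind : IndepFun U V μ) (δ t : ℝ) :
    tailProb μ (fun ω => U ω + V ω) t ≤
      tailProb μ U ((1 - δ) * t) + tailProb μ V ((1 - δ) * t) +
        tailProb μ U (δ * t) * tailProb μ V (δ * t) := by
  have hsub : {ω | U ω + V ω > t} ⊆
      ({ω | U ω > (1 - δ) * t} ∪ {ω | V ω > (1 - δ) * t}) ∪
        ({ω | U ω > δ * t} ∩ {ω | V ω > δ * t}) := by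
    intro ω hω
    simp only [Set.mem_union, Set.mem_inter_iff, Set.mem_ofPred_eq] at hω ⊢
    by_contra! hcon
    obtain ⟨⟨hU, hV⟩, hjoint⟩ := hcon
    by_cases hUδ : U ω > δ * t
    · linarith [hjoint hUδ]
    · linarith
  calc tailProb μ (fun ω => U ω + V ω) t
      ≤ μ.real ({ω | U ω > (1 - δ) * t} ∪ {ω | V ω > (1 - δ) * t}) +
          μ.real ({ω | U ω > δ * t} ∩ {ω | V ω > δ * t}) :=
        (measureReal_mono hsub).trans (measureReal_union_le _ _)
    _ ≤ _ := by
        rw [hind.measureReal_inter_eq_tailProb_mul]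
        gcongr
        exact measureReal_union_le _ _

theorem tendsto_tailProb_add_mul_rpow (hα : 0 < α) (hU0 : ∀ ω, 0 ≤ U ω) (hV0 : ∀ ω, 0 ≤ V ω)
    (hV : AEMeasurable V μ) (hind : IndepFun U V μ)
    (hUt : Tendsto (fun t => tailProb μ U t * t ^ α) atTop (𝓝 a))
    (hVt : Tendsto (fun t => tailProb μ V t * t ^ α) atTop (𝓝 b)) :
    Tendsto (fun t => tailProb μ (fun ω => U ω + V ω) t * t ^ α) atTop (𝓝 (a + b)) :=
  tendsto_mul_rpow_add_of_le_of_le hα hUt hVt (le_tailProb_add hU0 hV0 hV hind)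
    fun δ _ => tailProb_add_le hind δ

end TailProbability

theorem pareto_tail_convex_combination_equal_exponent_general
    {Ω : Type*} [MeasureSpace Ω] [IsProbabilityMeasure (ℙ : Measure Ω)]
    (ρ : ℝ) (hρ : ρ ∈ Set.Ioo (0 : ℝ) 1)
    (α cX cY : ℝ) (hα : 1 < α) (hcX : 0 < cX) (hcY : 0 < cY)
    (X Y : Ω → ℝ) (hYmeas : Measurable Y)
    (hXnonneg : ∀ ω, 0 ≤ X ω) (hYnonneg : ∀ ω, 0 ≤ Y ω)
    (hindep : IndepFun X Y ℙ)
    (hXtail : Tendsto (fun x : ℝ => (ℙ {ω | X ω > x}).toReal / (cX / x) ^ α)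
      atTop (𝓝 1))
    (hYtail : Tendsto (fun x : ℝ => (ℙ {ω | Y ω > x}).toReal / (cY / x) ^ α)
      atTop (𝓝 1)) :
    Tendsto (fun t : ℝ =>
        (ℙ {ω | (1 - ρ) * X ω + ρ * Y ω > t}).toReal /
          (((((1 - ρ) * cX) ^ α + (ρ * cY) ^ α) ^ (1 / α)) / t) ^ α)
      atTop (𝓝 1) := by
  obtain ⟨hρ0, hρ1⟩ := hρ
  have h1ρ : 0 < 1 - ρ := sub_pos.2 hρ1
  have hα0 : 0 < α := zero_lt_one.trans hα
  have hU := tendsto_tailProb_const_mul_mul_rpow ((tendsto_div_div_rpow_iff hcX).1 hXtail) h1ρ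
  have hV := tendsto_tailProb_const_mul_mul_rpow ((tendsto_div_div_rpow_iff hcY).1 hYtail) hρ0
  rw [← Real.mul_rpow hcX.le h1ρ.le, mul_comm cX] at hU
  rw [← Real.mul_rpow hcY.le hρ0.le, mul_comm cY] at hV
  have hZ := tendsto_tailProb_add_mul_rpow hα0
    (fun ω => mul_nonneg h1ρ.le (hXnonneg ω)) (fun ω => mul_nonneg hρ0.le (hYnonneg ω))
    (hYmeas.const_mul ρ).aemeasurable
    (hindep.comp (measurable_const_mul (1 - ρ)) (measurable_const_mul ρ)) hU hV
  have hsum : 0 < ((1 - ρ) * cX) ^ α + (ρ * cY) ^ α := by positivity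
  rw [tendsto_div_div_rpow_iff (by positivity), ← Real.rpow_mul hsum.le,
    one_div_mul_cancel hα0.ne', Real.rpow_one]
  exact hZ

/-- Fix `ρ ∈ (0,1)` and `α > 1`. If `X` and `Y` are independent
nonnegative random variables with finite means, each with Pareto tail of exponent `α`
and scales `c_X`, `c_Y`, then `Z = (1−ρ)X + ρY` has a Pareto tail with parameters
`(c_Z, α)` where `c_Z = (((1−ρ)c_X)^α + (ρ c_Y)^α)^{1/α}`. -/
theorem pareto_tail_convex_combination_equal_exponent
    {Ω : Type*} [MeasureSpace Ω] [IsProbabilityMeasure (ℙ : Measure Ω)]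
    (ρ : ℝ) (hρ : ρ ∈ Set.Ioo (0 : ℝ) 1)
    (α cX cY : ℝ) (hα : 1 < α) (hcX : 0 < cX) (hcY : 0 < cY)
    (X Y : Ω → ℝ) (hXmeas : Measurable X) (hYmeas : Measurable Y)
    (hXnonneg : ∀ ω, 0 ≤ X ω) (hYnonneg : ∀ ω, 0 ≤ Y ω)
    (hXint : Integrable X ℙ) (hYint : Integrable Y ℙ)
    (hindep : IndepFun X Y ℙ)
    (hXtail : Tendsto (fun x : ℝ => (ℙ {ω | X ω > x}).toReal / (cX / x) ^ α)
      atTop (𝓝 1))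
    (hYtail : Tendsto (fun x : ℝ => (ℙ {ω | Y ω > x}).toReal / (cY / x) ^ α)
      atTop (𝓝 1)) :
    Tendsto (fun t : ℝ =>
        (ℙ {ω | (1 - ρ) * X ω + ρ * Y ω > t}).toReal /
          (((((1 - ρ) * cX) ^ α + (ρ * cY) ^ α) ^ (1 / α)) / t) ^ α)
      atTop (𝓝 1) :=
  pareto_tail_convex_combination_equal_exponent_general ρ hρ α cX cY hα hcX hcY X Y hYmeas hXnonneg
    hYnonneg hindep hXtail hYtail
end

section
/- For c > 0, α > 1, and n a positive integer, the integral ∫_c^∞ (1 − (1 − (c/x)^α)^n) dx equals −c + n·c·Γ(1 − 1/α)·Γ(n)/Γ(n + 1 − 1/α). -/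
/-!
Expanding `1 - (1 - u) ^ n` binomially turns the integrand into a finite alternating combination
of the powers `(c / x) ^ (α k)`, `1 ≤ k ≤ n`, and `∫_c^∞ (c / x) ^ β dx = c / (β - 1)`.
The resulting sum is a partial-fraction expansion evaluated at `x = -1 / α`:
`∑_{k ≤ n} (-1)^k C(n, k) / (x + k) = Γ(x) n! / Γ(x + n + 1)`,
which follows by induction on `n` from Pascal's rule and `Γ(x + 1) = x Γ(x)`.
-/

open MeasureTheory Real Finset Set

open scoped Nat

theorem sum_range_neg_one_pow_mul_succ_choose_div (n : ℕ) (x : ℝ) :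
    ∑ k ∈ range (n + 2), (-1) ^ k * (n + 1).choose k / (x + k) =
      ∑ k ∈ range (n + 1), (-1) ^ k * n.choose k / (x + k) -
        ∑ k ∈ range (n + 1), (-1) ^ k * n.choose k / (x + 1 + k) :=
  calc _ = ∑ k ∈ range (n + 2), ((n + 1).choose k : ℝ) * ((-1) ^ k / (x + k)) :=
        sum_congr rfl fun _ _ ↦ by ring
    _ = ∑ k ∈ range (n + 1), (n.choose k : ℝ) * ((-1) ^ k / (x + k)) +
        ∑ k ∈ range (n + 1), (n.choose k : ℝ) * ((-1) ^ (k + 1) / (x + (k + 1 : ℕ))) :=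
        sum_choose_succ_mul (fun k _ ↦ (-1) ^ k / (x + k)) n
    _ = _ := by
        rw [sub_eq_add_neg, ← sum_neg_distrib]
        congr 1 <;> refine sum_congr rfl fun k _ ↦ ?_
        · ring
        · push_cast
          ring_nf

theorem sum_range_neg_one_pow_mul_choose_div (n : ℕ) {x : ℝ} (hx : ∀ m : ℕ, x ≠ -m) :
    ∑ k ∈ range (n + 1), (-1) ^ k * n.choose k / (x + k) =
      Gamma x * n ! / Gamma (x + n + 1) := by
  have hx0 : x ≠ 0 := by simpa using hx 0
  have hΓ : Gamma x ≠ 0 := Gamma_ne_zero hx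
  induction n generalizing x with
  | zero => simp [Gamma_add_one hx0, div_mul_cancel_right₀ hΓ]
  | succ n ih =>
    have hxn : x + n + 1 ≠ 0 := fun h ↦ hx (n + 1) (by push_cast; linarith)
    have hx1 : ∀ m : ℕ, x + 1 ≠ -m := fun m h ↦ hx (m + 1) (by push_cast; linarith)
    rw [sum_range_neg_one_pow_mul_succ_choose_div, ih hx hx0 hΓ,
      ih hx1 (by simpa using hx1 0) (Gamma_ne_zero hx1), Gamma_add_one hx0,
      show x + 1 + n + 1 = (x + n + 1) + 1 by ring, Nat.factorial_succ]
    push_cast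
    rw [show x + (n + 1) + 1 = (x + n + 1) + 1 by ring, Gamma_add_one hxn]
    field_simp
    ring

theorem sum_range_neg_one_pow_mul_choose_succ_div (n : ℕ) {x : ℝ} (hx : ∀ m : ℕ, x ≠ -m) :
    ∑ k ∈ range n, (-1) ^ k * n.choose (k + 1) / (x + (k + 1)) =
      x⁻¹ - Gamma x * n ! / Gamma (x + n + 1) := by
  rw [← sum_range_neg_one_pow_mul_choose_div n hx, sum_range_succ']
  simp only [pow_succ, Nat.cast_succ, pow_zero, Nat.choose_zero_right, Nat.cast_zero, add_zero,
    one_mul, mul_neg_one, neg_mul, neg_div, sum_neg_distrib]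
  ring

theorem one_sub_one_sub_pow {R : Type*} [CommRing R] (u : R) (n : ℕ) :
    1 - (1 - u) ^ n = ∑ k ∈ range n, (-1) ^ k * n.choose (k + 1) * u ^ (k + 1) := by
  rw [sub_eq_neg_add 1 u, add_pow, sum_range_succ']
  simp only [one_pow, mul_one, pow_zero, Nat.choose_zero_right, Nat.cast_one,
    sub_add_cancel_right, ← sum_neg_distrib]
  refine sum_congr rfl fun k _ ↦ ?_
  rw [neg_pow, pow_succ]
  ring

theorem div_rpow_eqOn {c β : ℝ} (hc : 0 ≤ c) :
    EqOn (fun x ↦ (c / x) ^ β) (fun x ↦ c ^ β * x ^ (-β)) (Ioi 0) := fun x hx ↦ by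
  dsimp only
  rw [div_rpow hc (le_of_lt hx), rpow_neg (le_of_lt hx), div_eq_mul_inv]

theorem integrableOn_Ioi_div_rpow {c β : ℝ} (hc : 0 < c) (hβ : 1 < β) :
    IntegrableOn (fun x ↦ (c / x) ^ β) (Ioi c) :=
  IntegrableOn.congr_fun ((integrableOn_Ioi_rpow_of_lt (neg_lt_neg hβ) hc).const_mul (c ^ β))
    ((div_rpow_eqOn hc.le).symm.mono (Ioi_subset_Ioi hc.le)) measurableSet_Ioi

theorem integral_Ioi_div_rpow {c β : ℝ} (hc : 0 < c) (hβ : 1 < β) :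
    ∫ x in Ioi c, (c / x) ^ β = c / (β - 1) := by
  rw [setIntegral_congr_fun measurableSet_Ioi ((div_rpow_eqOn hc.le).mono (Ioi_subset_Ioi hc.le)),
    integral_const_mul, integral_Ioi_rpow_of_lt (neg_lt_neg hβ) hc, neg_div, ← div_neg,
    mul_div_assoc', ← rpow_add hc]
  ring_nf
  simp [mul_comm]

theorem integral_Ioi_one_sub_one_sub_div_rpow_pow {c α : ℝ} (hc : 0 < c) (hα : 1 < α) (n : ℕ) :
    ∫ x in Ioi c, (1 - (1 - (c / x) ^ α) ^ n) =
      ∑ k ∈ range n, (-1) ^ k * n.choose (k + 1) * (c / (α * (k + 1) - 1)) := by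
  have hexp : ∀ k : ℕ, 1 < α * (k + 1) := fun k ↦ by nlinarith [(k.cast_nonneg : (0 : ℝ) ≤ k)]
  have expand : EqOn (fun x ↦ 1 - (1 - (c / x) ^ α) ^ n)
      (fun x ↦ ∑ k ∈ range n, (-1) ^ k * n.choose (k + 1) * (c / x) ^ (α * (k + 1))) (Ioi c) := by
    intro x hx
    simp only [one_sub_one_sub_pow]
    refine sum_congr rfl fun k _ ↦ ?_
    rw [← rpow_mul_natCast (div_pos hc (hc.trans hx)).le]
    push_cast
    rfl
  rw [setIntegral_congr_fun measurableSet_Ioi expand,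
    integral_finsetSum _ fun k _ ↦ (integrableOn_Ioi_div_rpow hc (hexp k)).const_mul _]
  simp only [integral_const_mul, integral_Ioi_div_rpow hc (hexp _)]

/-- For `c > 0`, `α > 1`, and `n` a positive integer,
`∫_c^∞ (1 − (1 − (c/x)^α)^n) dx = −c + n·c·Γ(1 − 1/α)·Γ(n)/Γ(n + 1 − 1/α)`. -/
theorem integral_pareto_max_tail (c α : ℝ) (hc : 0 < c) (hα : 1 < α)
    (n : ℕ) (hn : 0 < n) :
    ∫ x in Set.Ici c, (1 - (1 - (c / x) ^ α) ^ n) =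
      -c + n * c * Real.Gamma (1 - 1 / α) * Real.Gamma n /
        Real.Gamma (n + 1 - 1 / α) := by
  have hs : 0 < 1 / α := by positivity
  have hs1 : 1 / α < 1 := (div_lt_one (by positivity)).2 hα
  have hx : ∀ m : ℕ, -(1 / α) ≠ -m := by
    rintro (_ | m) h
    · simp only [CharP.cast_eq_zero, neg_zero, neg_eq_zero, one_div, inv_eq_zero] at h
      linarith
    · push_cast at h
      linarith [(m.cast_nonneg : (0 : ℝ) ≤ m)]
  have hΓ : Gamma (1 - 1 / α) = -(1 / α) * Gamma (-(1 / α)) := by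
    rw [← Gamma_add_one (by linarith)]
    ring_nf
  have hfact : (n ! : ℝ) = n * Gamma n := by
    rw [← Gamma_nat_eq_factorial, Gamma_add_one (by positivity)]
  rw [integral_Ici_eq_integral_Ioi, integral_Ioi_one_sub_one_sub_div_rpow_pow hc hα]
  calc _ = c / α * ∑ k ∈ range n, (-1) ^ k * n.choose (k + 1) / (-(1 / α) + (k + 1)) := by
        rw [mul_sum]
        refine sum_congr rfl fun k _ ↦ ?_
        field_simp
        ring
    _ = c / α * ((-(1 / α))⁻¹ - Gamma (-(1 / α)) * n ! / Gamma (-(1 / α) + n + 1)) := by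
        rw [sum_range_neg_one_pow_mul_choose_succ_div n hx]
    _ = _ := by
        rw [hΓ, hfact, show -(1 / α) + n + 1 = n + 1 - 1 / α by ring]
        field_simp
        ring
end

section
/- For c̄ > 0, λ > 0, n a positive integer, and s = ln(c̄)/λ, the integral ∫_s^∞ (1 − (1 − c̄·exp(−λx))^n) dx equals H_n/λ, where H_n = 1 + 1/2 + ... + 1/n is the n-th harmonic number. -/
open MeasureTheory Real Filter Finset Topology

/-!
Put `u x = c̄ e^{-λx}`, which decreases from `1` at `s` to `0` at `∞`. By the geometric sum,
`1 - (1 - u)^n = u ∑_{k<n} (1 - u)^k`, and since `u' = -λu` this is the derivative of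
`λ⁻¹ L_n (1 - u)`, where `L_n y = ∑_{k<n} y^{k+1}/(k+1)` is a partial sum of `-log (1 - y)`.
The integrand is nonnegative, so the improper integral is `λ⁻¹ (L_n 1 - L_n 0) = H_n / λ`.
-/

noncomputable def logSeriesPartialSum (n : ℕ) (y : ℝ) : ℝ :=
  ∑ k ∈ range n, y ^ (k + 1) / (k + 1)

theorem hasDerivAt_logSeriesPartialSum (n : ℕ) (y : ℝ) :
    HasDerivAt (logSeriesPartialSum n) (∑ k ∈ range n, y ^ k) y := by
  unfold logSeriesPartialSum
  refine (HasDerivAt.fun_sum fun k _ => (hasDerivAt_pow (k + 1) y).div_const _).congr_deriv ?_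
  refine sum_congr rfl fun k _ => ?_
  push_cast
  field_simp

@[simp]
theorem logSeriesPartialSum_zero_right (n : ℕ) : logSeriesPartialSum n 0 = 0 := by
  simp [logSeriesPartialSum]

@[simp]
theorem logSeriesPartialSum_one (n : ℕ) :
    logSeriesPartialSum n 1 = ∑ k ∈ range n, (1 : ℝ) / (k + 1) := by
  simp [logSeriesPartialSum]

theorem one_sub_one_sub_pow_nonneg {u : ℝ} (h₀ : 0 ≤ u) (h₁ : u ≤ 1) (n : ℕ) :
    0 ≤ 1 - (1 - u) ^ n :=
  sub_nonneg.2 (pow_le_one₀ (by linarith) (by linarith))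

theorem hasDerivAt_one_sub_mul_exp_neg_mul (c lam x : ℝ) :
    HasDerivAt (fun y => 1 - c * exp (-lam * y)) (lam * (c * exp (-lam * x))) x := by
  refine ((((hasDerivAt_id x).const_mul (-lam)).exp.const_mul c).const_sub 1).congr_deriv ?_
  simp only [id_eq, mul_one]
  ring

theorem hasDerivAt_logSeriesPartialSum_one_sub_mul_exp (c : ℝ) {lam : ℝ} (hlam : lam ≠ 0)
    (n : ℕ) (x : ℝ) :
    HasDerivAt (fun y => logSeriesPartialSum n (1 - c * exp (-lam * y)) / lam)
      (1 - (1 - c * exp (-lam * x)) ^ n) x := by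
  refine (((hasDerivAt_logSeriesPartialSum n _).comp x
    (hasDerivAt_one_sub_mul_exp_neg_mul c lam x)).div_const lam).congr_deriv ?_
  rw [← mul_neg_geom_sum, sub_sub_cancel]
  field_simp

theorem tendsto_one_sub_mul_exp_neg_mul_atTop (c : ℝ) {lam : ℝ} (hlam : 0 < lam) :
    Tendsto (fun x => 1 - c * exp (-lam * x)) atTop (𝓝 1) := by
  have hexp : Tendsto (fun x => exp (-lam * x)) atTop (𝓝 0) :=
    tendsto_exp_atBot.comp (tendsto_id.const_mul_atTop_of_neg (neg_neg_iff_pos.2 hlam))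
  simpa using (hexp.const_mul c).const_sub 1

theorem integral_exponential_max_tail_general (cbar lam : ℝ) (hc : 0 < cbar) (hlam : 0 < lam)
    (n : ℕ) :
    ∫ x in Set.Ici (Real.log cbar / lam), (1 - (1 - cbar * Real.exp (-lam * x)) ^ n) =
      (∑ k ∈ Finset.range n, (1 : ℝ) / (k + 1)) / lam := by
  set s := Real.log cbar / lam
  have hs : cbar * exp (-lam * s) = 1 := by
    rw [neg_mul, mul_div_cancel₀ _ hlam.ne', exp_neg, exp_log hc, mul_inv_cancel₀ hc.ne']
  have hle : ∀ x ∈ Set.Ioi s, cbar * exp (-lam * x) ≤ 1 := fun x hx =>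
    hs ▸ mul_le_mul_of_nonneg_left (exp_le_exp.2 (by nlinarith [hx.out])) hc.le
  have hlim := ((hasDerivAt_logSeriesPartialSum n 1).continuousAt.tendsto.comp
    (tendsto_one_sub_mul_exp_neg_mul_atTop cbar hlam)).div_const lam
  rw [integral_Ici_eq_integral_Ioi, integral_Ioi_of_hasDerivAt_of_nonneg'
    (fun x _ => hasDerivAt_logSeriesPartialSum_one_sub_mul_exp cbar hlam.ne' n x)
    (fun x hx => one_sub_one_sub_pow_nonneg (by positivity) (hle x hx) n) hlim]
  simp only [hs, sub_self, logSeriesPartialSum_zero_right, zero_div,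
    sub_zero, logSeriesPartialSum_one]

/-- For `c̄ > 0`, `λ > 0`, `n` a positive integer, and
`s = ln(c̄)/λ`, one has `∫_s^∞ (1 − (1 − c̄·exp(−λx))^n) dx = H_n/λ`, where `H_n`
is the `n`-th harmonic number. -/
theorem integral_exponential_max_tail (cbar lam : ℝ) (hc : 0 < cbar) (hlam : 0 < lam)
    (n : ℕ) (hn : 0 < n) :
    ∫ x in Set.Ici (Real.log cbar / lam), (1 - (1 - cbar * Real.exp (-lam * x)) ^ n) =
      (∑ k ∈ Finset.range n, (1 : ℝ) / (k + 1)) / lam :=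
  integral_exponential_max_tail_general cbar lam hc hlam n
end

section
/- Fix λ > 0, c > 0. For each k, let φ_{(k:k)} denote the maximum of k i.i.d. nonnegative random variables with finite mean and distribution having an exponential tail with parameters (c, λ). Define Φ_n = (1/n) Σ_{k=1}^n E[φ_{(k:k)}]. Then lim_{n→∞} Φ_n / (ln n / λ) = 1. -/
open MeasureTheory ProbabilityTheory Filter Topology Set Real

/-!
Write `M_k` for the maximum of `k` i.i.d. copies and `p t = P(φ > t)`. Then
`P(M_k > t) = 1 - (1 - p t)^k`, which lies between `1 - exp (-k p t)` and `k p t`.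
Since `p t ≤ C e^{-λt}` for all `t`, integrating the tail of `M_k` with the split point
`t = log k / λ` gives `E M_k ≤ (log k + C) / λ`. Since `p t ≥ (c/2) e^{-λt}` for large `t`,
Markov's inequality at the point where `k (c/2) e^{-λt} = log (1 / (1 - a))` gives
`E M_k ≥ a log k / λ - B_a` for every `a < 1`. As `∑_{k ≤ n} log k = n log n - O(n)`
(Stirling), the average `Φ_n` is at most `log n / λ + O(1)` and at least `a log n / λ - O(1)`.
-/

section MaxOfIID

variable {Ω ι : Type*} {mΩ : MeasurableSpace Ω} {μ : Measure Ω} [Fintype ι] [Nonempty ι]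
  {X : ι → Ω → ℝ} {Y : Ω → ℝ}

lemma ae_nonneg_iSup (hX0 : ∀ i, 0 ≤ᵐ[μ] X i) : 0 ≤ᵐ[μ] fun ω => ⨆ i, X i ω := by
  filter_upwards [hX0 (Classical.arbitrary ι)] with ω hω
  exact hω.trans (le_ciSup (Finite.bddAbove_range fun i => X i ω) _)

lemma measure_iSup_le_eq_pow (hindep : iIndepFun X μ) (hident : ∀ i, IdentDistrib (X i) Y μ μ)
    (t : ℝ) : μ {ω | ⨆ i, X i ω ≤ t} = μ {ω | Y ω ≤ t} ^ Fintype.card ι := by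
  have hset : {ω | ⨆ i, X i ω ≤ t} = ⋂ i, X i ⁻¹' Iic t := by
    ext ω
    simp [ciSup_le_iff (Finite.bddAbove_range _)]
  rw [hset, hindep.meas_iInter fun i => ⟨Iic t, measurableSet_Iic, rfl⟩,
    Finset.prod_congr rfl fun i _ => (hident i).measure_mem_eq measurableSet_Iic]
  simp [preimage]

lemma measure_lt_iSup_le_card_mul (hident : ∀ i, IdentDistrib (X i) Y μ μ) (t : ℝ) :
    μ {ω | t < ⨆ i, X i ω} ≤ Fintype.card ι * μ {ω | t < Y ω} := by
  have hset : {ω | t < ⨆ i, X i ω} = ⋃ i, X i ⁻¹' Ioi t := by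
    ext ω
    simp [lt_ciSup_iff (Finite.bddAbove_range _)]
  calc μ {ω | t < ⨆ i, X i ω} ≤ ∑ i, μ (X i ⁻¹' Ioi t) :=
        hset ▸ measure_iUnion_fintype_le _ _
    _ = ∑ _i : ι, μ (Y ⁻¹' Ioi t) :=
      Finset.sum_congr rfl fun i _ => (hident i).measure_mem_eq measurableSet_Ioi
    _ = Fintype.card ι * μ {ω | t < Y ω} := by simp [preimage]

lemma one_sub_exp_le_measureReal_lt_iSup [IsProbabilityMeasure μ] (hindep : iIndepFun X μ)
    (hident : ∀ i, IdentDistrib (X i) Y μ μ) (t : ℝ) :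
    1 - exp (-(Fintype.card ι * μ.real {ω | t < Y ω})) ≤
      μ.real {ω | t < ⨆ i, X i ω} := by
  set k := Fintype.card ι
  set p := μ.real {ω | t < Y ω}
  have hY : NullMeasurableSet {ω | t < Y ω} μ :=
    (hident (Classical.arbitrary ι)).aemeasurable_snd.nullMeasurable measurableSet_Ioi
  have hM : NullMeasurableSet {ω | ⨆ i, X i ω ≤ t} μ :=
    (AEMeasurable.iSup fun i => (hident i).aemeasurable_fst).nullMeasurable measurableSet_Iic
  have hpow : (1 - p) ^ k ≤ exp (-(k * p)) := by
    simpa [k, Fintype.card_ne_zero] using one_sub_div_pow_le_exp_neg (n := k) (t := k * p)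
      (mul_le_of_le_one_right (by positivity) measureReal_le_one)
  have hle : μ.real {ω | ⨆ i, X i ω ≤ t} = (1 - p) ^ k := by
    rw [measureReal_def, measure_iSup_le_eq_pow hindep hident, ENNReal.toReal_pow,
      ← measureReal_def, ← probReal_compl_eq_one_sub₀ hY]
    congr 2 with ω
    simp
  have hlt : {ω | t < ⨆ i, X i ω} = {ω | ⨆ i, X i ω ≤ t}ᶜ := by ext; simp
  rw [hlt, probReal_compl_eq_one_sub₀ hM, hle]
  linarith

end MaxOfIID

section ExponentialTail

variable {Ω : Type*} {mΩ : MeasurableSpace Ω} {μ : Measure Ω} [IsProbabilityMeasure μ]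
  {X : Ω → ℝ} {K lam b : ℝ}

lemma lintegral_ofReal_le_of_measure_lt_le_exp (hX0 : 0 ≤ᵐ[μ] X) (hX : AEMeasurable X μ)
    (hK : 0 ≤ K) (hlam : 0 < lam) (hb : 0 ≤ b)
    (htail : ∀ t, b ≤ t → μ {ω | t < X ω} ≤ ENNReal.ofReal (K * exp (-lam * t))) :
    ∫⁻ ω, ENNReal.ofReal (X ω) ∂μ ≤ ENNReal.ofReal (b + K * exp (-lam * b) / lam) := by
  have hexp : IntegrableOn (fun t => K * exp (-lam * t)) (Ioi b) :=
    (exp_neg_integrableOn_Ioi b hlam).const_mul K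
  have hhead : ∫⁻ t in Ioc 0 b, μ {ω | t < X ω} ≤ ENNReal.ofReal b := by
    calc ∫⁻ t in Ioc 0 b, μ {ω | t < X ω} ≤ ∫⁻ _ in Ioc 0 b, 1 :=
          lintegral_mono fun _ => prob_le_one
      _ = ENNReal.ofReal b := by simp
  have hrest :
      ∫⁻ t in Ioi b, μ {ω | t < X ω} ≤ ENNReal.ofReal (K * exp (-lam * b) / lam) := by
    calc ∫⁻ t in Ioi b, μ {ω | t < X ω}
        ≤ ∫⁻ t in Ioi b, ENNReal.ofReal (K * exp (-lam * t)) :=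
          setLIntegral_mono' measurableSet_Ioi fun t ht => htail t (le_of_lt ht)
      _ = ENNReal.ofReal (∫ t in Ioi b, K * exp (-lam * t)) :=
          (ofReal_integral_eq_lintegral_ofReal hexp (ae_of_all _ fun t => by positivity)).symm
      _ = ENNReal.ofReal (K * exp (-lam * b) / lam) := by
          rw [integral_const_mul, integral_exp_mul_Ioi (by linarith)]
          congr 1
          field_simp
  rw [lintegral_eq_lintegral_meas_lt μ hX0 hX, ← Ioc_union_Ioi_eq_Ioi hb,
    lintegral_union measurableSet_Ioi Ioc_disjoint_Ioi_same,
    ENNReal.ofReal_add hb (by positivity)]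
  exact add_le_add hhead hrest

lemma integrable_of_measure_lt_le_exp (hX0 : 0 ≤ᵐ[μ] X) (hX : AEMeasurable X μ)
    (hK : 0 ≤ K) (hlam : 0 < lam) (hb : 0 ≤ b)
    (htail : ∀ t, b ≤ t → μ {ω | t < X ω} ≤ ENNReal.ofReal (K * exp (-lam * t))) :
    Integrable X μ :=
  ⟨hX.aestronglyMeasurable, (hasFiniteIntegral_iff_ofReal hX0).2 <|
    (lintegral_ofReal_le_of_measure_lt_le_exp hX0 hX hK hlam hb htail).trans_lt
      ENNReal.ofReal_lt_top⟩

lemma integral_le_of_measure_lt_le_exp (hX0 : 0 ≤ᵐ[μ] X) (hX : AEMeasurable X μ)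
    (hK : 0 ≤ K) (hlam : 0 < lam) (hb : 0 ≤ b)
    (htail : ∀ t, b ≤ t → μ {ω | t < X ω} ≤ ENNReal.ofReal (K * exp (-lam * t))) :
    ∫ ω, X ω ∂μ ≤ b + K * exp (-lam * b) / lam := by
  rw [integral_eq_lintegral_of_nonneg_ae hX0 hX.aestronglyMeasurable]
  exact ENNReal.toReal_le_of_le_ofReal (by positivity)
    (lintegral_ofReal_le_of_measure_lt_le_exp hX0 hX hK hlam hb htail)

lemma mul_measureReal_lt_le_integral (hX0 : 0 ≤ᵐ[μ] X) (hX : Integrable X μ) {t : ℝ}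
    (ht : 0 ≤ t) :
    t * μ.real {ω | t < X ω} ≤ ∫ ω, X ω ∂μ :=
  (mul_le_mul_of_nonneg_left (measureReal_mono fun ω (h : t < X ω) => h.le) ht).trans
    (mul_meas_ge_le_integral_of_nonneg hX0 hX t)

end ExponentialTail

section ExpectedMaximum

variable {Ω ι : Type*} {mΩ : MeasurableSpace Ω} {μ : Measure Ω} [IsProbabilityMeasure μ]
  [Fintype ι] [Nonempty ι] {X : ι → Ω → ℝ} {Y : Ω → ℝ} {C lam : ℝ}

lemma measure_lt_iSup_le_exp (hident : ∀ i, IdentDistrib (X i) Y μ μ)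
    (hC : ∀ t, μ.real {ω | t < Y ω} ≤ C * exp (-lam * t)) (t : ℝ) :
    μ {ω | t < ⨆ i, X i ω} ≤ ENNReal.ofReal (Fintype.card ι * C * exp (-lam * t)) := by
  calc μ {ω | t < ⨆ i, X i ω} ≤ Fintype.card ι * μ {ω | t < Y ω} :=
        measure_lt_iSup_le_card_mul hident t
    _ = ENNReal.ofReal (Fintype.card ι * μ.real {ω | t < Y ω}) := by
        rw [ENNReal.ofReal_mul (by positivity), ENNReal.ofReal_natCast, measureReal_def,
          ENNReal.ofReal_toReal (measure_ne_top _ _)]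
    _ ≤ ENNReal.ofReal (Fintype.card ι * C * exp (-lam * t)) := by
        rw [mul_assoc]; gcongr; exact hC t

lemma integrable_iSup_of_measureReal_lt_le_exp (hident : ∀ i, IdentDistrib (X i) Y μ μ)
    (hX0 : ∀ i, 0 ≤ᵐ[μ] X i) (hlam : 0 < lam)
    (hC : ∀ t, μ.real {ω | t < Y ω} ≤ C * exp (-lam * t)) :
    Integrable (fun ω => ⨆ i, X i ω) μ := by
  have hC0 : 0 ≤ C := by simpa using measureReal_nonneg.trans (hC 0)
  exact integrable_of_measure_lt_le_exp (ae_nonneg_iSup hX0)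
    (AEMeasurable.iSup fun i => (hident i).aemeasurable_fst) (by positivity) hlam le_rfl
    fun t _ => measure_lt_iSup_le_exp hident hC t

lemma integral_iSup_le_of_measureReal_lt_le_exp (hident : ∀ i, IdentDistrib (X i) Y μ μ)
    (hX0 : ∀ i, 0 ≤ᵐ[μ] X i) (hlam : 0 < lam)
    (hC : ∀ t, μ.real {ω | t < Y ω} ≤ C * exp (-lam * t)) :
    ∫ ω, ⨆ i, X i ω ∂μ ≤ (log (Fintype.card ι) + C) / lam := by
  have hC0 : 0 ≤ C := by simpa using measureReal_nonneg.trans (hC 0)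
  have hk : (0 : ℝ) < Fintype.card ι := by positivity
  -- the tail bound `k C e^{-λt}` of the maximum reaches `C` at `t = log k / λ`
  have hb : Fintype.card ι * C * exp (-lam * (log (Fintype.card ι) / lam)) = C := by
    rw [show -lam * (log (Fintype.card ι) / lam) = -log (Fintype.card ι) by field_simp,
      exp_neg, exp_log hk]
    field_simp
  calc ∫ ω, ⨆ i, X i ω ∂μ
      ≤ log (Fintype.card ι) / lam
          + Fintype.card ι * C * exp (-lam * (log (Fintype.card ι) / lam)) / lam :=
        integral_le_of_measure_lt_le_exp (ae_nonneg_iSup hX0)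
          (AEMeasurable.iSup fun i => (hident i).aemeasurable_fst) (by positivity) hlam
          (by positivity) fun t _ => measure_lt_iSup_le_exp hident hC t
    _ = (log (Fintype.card ι) + C) / lam := by rw [hb]; ring

lemma mul_one_sub_exp_le_integral_iSup (hindep : iIndepFun X μ)
    (hident : ∀ i, IdentDistrib (X i) Y μ μ) (hX0 : ∀ i, 0 ≤ᵐ[μ] X i)
    (hM : Integrable (fun ω => ⨆ i, X i ω) μ) {t : ℝ} (ht : 0 ≤ t) :
    t * (1 - exp (-(Fintype.card ι * μ.real {ω | t < Y ω}))) ≤ ∫ ω, ⨆ i, X i ω ∂μ :=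
  (mul_le_mul_of_nonneg_left (one_sub_exp_le_measureReal_lt_iSup hindep hident t) ht).trans
    (mul_measureReal_lt_le_integral (ae_nonneg_iSup hX0) hM ht)

lemma le_integral_iSup_of_mul_exp_le_measureReal {c x₁ a : ℝ} (hindep : iIndepFun X μ)
    (hident : ∀ i, IdentDistrib (X i) Y μ μ) (hX0 : ∀ i, 0 ≤ᵐ[μ] X i)
    (hM : Integrable (fun ω => ⨆ i, X i ω) μ) (hc : 0 < c) (hlam : 0 < lam)
    (hx₁ : 0 ≤ x₁)
    (hlow : ∀ t, x₁ ≤ t → c * exp (-lam * t) ≤ μ.real {ω | t < Y ω})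
    (ha : a ∈ Ioo (0 : ℝ) 1) :
    a * ((log (Fintype.card ι) - log (-log (1 - a) / c)) / lam - x₁) ≤
      ∫ ω, ⨆ i, X i ω ∂μ := by
  set k : ℝ := (Fintype.card ι : ℝ)
  set m := -log (1 - a)
  set t := (log k - log (m / c)) / lam
  have hM0 : 0 ≤ ∫ ω, ⨆ i, X i ω ∂μ := integral_nonneg_of_ae (ae_nonneg_iSup hX0)
  rcases lt_or_ge t x₁ with ht | ht
  · exact (mul_neg_of_pos_of_neg ha.1 (by linarith)).le.trans hM0
  have hk : 0 < k := by positivity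
  have hm : 0 < m := neg_pos.2 (log_neg (by linarith [ha.2]) (by linarith [ha.1]))
  -- `t` is chosen so that `k c e^{-λt} = m`, hence `P(max ≤ t) ≤ e^{-m} = 1 - a`
  have hkt : k * (c * exp (-lam * t)) = m := by
    have hlt : lam * t = log k - log (m / c) := by simp only [t]; field_simp
    rw [show -lam * t = log (m / c) - log k by linarith, exp_sub,
      exp_log (by positivity), exp_log hk]
    field_simp
  have hexp : exp (-(k * μ.real {ω | t < Y ω})) ≤ 1 - a := by
    calc exp (-(k * μ.real {ω | t < Y ω})) ≤ exp (-m) := by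
          rw [exp_le_exp, neg_le_neg_iff, ← hkt]
          exact mul_le_mul_of_nonneg_left (hlow t ht) hk.le
      _ = 1 - a := by rw [neg_neg, exp_log (by linarith [ha.2])]
  calc a * (t - x₁) ≤ t * a := by nlinarith [ha.1]
    _ ≤ t * (1 - exp (-(k * μ.real {ω | t < Y ω}))) :=
        mul_le_mul_of_nonneg_left (by linarith) (by linarith)
    _ ≤ ∫ ω, ⨆ i, X i ω ∂μ :=
        mul_one_sub_exp_le_integral_iSup hindep hident hX0 hM (by linarith)

end ExpectedMaximum

lemma sum_Icc_log_le (n : ℕ) : ∑ k ∈ Finset.Icc 1 n, log k ≤ n * log n := by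
  calc ∑ k ∈ Finset.Icc 1 n, log k ≤ ∑ _k ∈ Finset.Icc 1 n, log n :=
        Finset.sum_le_sum fun k hk => by
          have := Finset.mem_Icc.1 hk
          exact log_le_log (by exact_mod_cast this.1) (by exact_mod_cast this.2)
    _ = n * log n := by simp

lemma sum_Icc_log_eq_log_factorial (n : ℕ) :
    ∑ k ∈ Finset.Icc 1 n, log k = log n.factorial := by
  rw [← log_prod fun k hk => by have := (Finset.mem_Icc.1 hk).1; positivity,
    ← Finset.Ico_add_one_right_eq_Icc, ← Finset.prod_Ico_id_eq_factorial]
  push_cast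
  rfl

lemma le_sum_Icc_log {n : ℕ} (hn : n ≠ 0) :
    n * log n - n ≤ ∑ k ∈ Finset.Icc 1 n, log k := by
  rw [sum_Icc_log_eq_log_factorial]
  have := Stirling.le_log_factorial_stirling hn
  have : 0 ≤ log n := log_natCast_nonneg n
  have : 0 ≤ log (2 * π) := log_nonneg (by linarith [pi_gt_three])
  linarith

lemma inv_mul_sum_Icc_le {u : ℕ → ℝ} {a b : ℝ} (ha : 0 ≤ a)
    (hu : ∀ k : ℕ, 1 ≤ k → u k ≤ a * log k + b) {n : ℕ} (hn : n ≠ 0) :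
    (n : ℝ)⁻¹ * ∑ k ∈ Finset.Icc 1 n, u k ≤ a * log n + b := by
  have hn' : (0 : ℝ) < n := by positivity
  rw [inv_mul_le_iff₀ hn']
  calc ∑ k ∈ Finset.Icc 1 n, u k ≤ ∑ k ∈ Finset.Icc 1 n, (a * log k + b) :=
        Finset.sum_le_sum fun k hk => hu k (Finset.mem_Icc.1 hk).1
    _ = a * ∑ k ∈ Finset.Icc 1 n, log k + n * b := by
        simp [Finset.sum_add_distrib, Finset.mul_sum]
    _ ≤ a * (n * log n) + n * b := by gcongr; exact sum_Icc_log_le n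
    _ = n * (a * log n + b) := by ring

lemma le_inv_mul_sum_Icc {u : ℕ → ℝ} {a b : ℝ} (ha : 0 ≤ a)
    (hu : ∀ k : ℕ, 1 ≤ k → a * log k + b ≤ u k) {n : ℕ} (hn : n ≠ 0) :
    a * (log n - 1) + b ≤ (n : ℝ)⁻¹ * ∑ k ∈ Finset.Icc 1 n, u k := by
  have hn' : (0 : ℝ) < n := by positivity
  rw [le_inv_mul_iff₀ hn']
  calc n * (a * (log n - 1) + b) = a * (n * log n - n) + n * b := by ring
    _ ≤ a * ∑ k ∈ Finset.Icc 1 n, log k + n * b := by gcongr; exact le_sum_Icc_log hn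
    _ = ∑ k ∈ Finset.Icc 1 n, (a * log k + b) := by
        simp [Finset.sum_add_distrib, Finset.mul_sum]
    _ ≤ ∑ k ∈ Finset.Icc 1 n, u k :=
        Finset.sum_le_sum fun k hk => hu k (Finset.mem_Icc.1 hk).1

lemma tendsto_div_nhds_one_of_bounds {α : Type*} {l : Filter α} {f g : α → ℝ}
    (hg : Tendsto g l atTop) (hup : ∃ A, ∀ᶠ x in l, f x ≤ g x + A)
    (hlow : ∀ a ∈ Ioo (0 : ℝ) 1, ∃ B, ∀ᶠ x in l, a * g x - B ≤ f x) :
    Tendsto (fun x => f x / g x) l (𝓝 1) := by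
  have hg_pos : ∀ᶠ x in l, 0 < g x := hg.eventually_gt_atTop 0
  refine tendsto_order.2 ⟨fun a ha => ?_, fun b hb => ?_⟩
  · obtain ⟨a', ha_lt, ha'_lt⟩ := exists_between (max_lt ha one_pos)
    obtain ⟨B, hB⟩ := hlow a' ⟨(le_max_right a 0).trans_lt ha_lt, ha'_lt⟩
    have hlim : Tendsto (fun x => a' - B / g x) l (𝓝 a') := by
      simpa using tendsto_const_nhds.sub (tendsto_const_nhds.div_atTop hg)
    filter_upwards [hlim.eventually_const_lt ((le_max_left a 0).trans_lt ha_lt), hB, hg_pos]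
      with x hx hBx hgx
    calc a < a' - B / g x := hx
      _ = (a' * g x - B) / g x := by field_simp
      _ ≤ f x / g x := by gcongr
  · obtain ⟨A, hA⟩ := hup
    have hlim : Tendsto (fun x => 1 + A / g x) l (𝓝 1) := by
      simpa using tendsto_const_nhds.add (tendsto_const_nhds.div_atTop hg)
    filter_upwards [hlim.eventually_lt_const hb, hA, hg_pos] with x hx hAx hgx
    calc f x / g x ≤ (g x + A) / g x := by gcongr
      _ = 1 + A / g x := by field_simp
      _ < b := hx

lemma exists_bounds_of_tendsto_div_mul_exp {p : ℝ → ℝ} {c lam : ℝ} (hc : 0 < c)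
    (h : Tendsto (fun t => p t / (c * exp (-lam * t))) atTop (𝓝 1)) :
    ∃ x₀, 0 ≤ x₀ ∧ ∀ t, x₀ ≤ t →
      c / 2 * exp (-lam * t) ≤ p t ∧ p t ≤ 2 * c * exp (-lam * t) := by
  obtain ⟨x₀, hx₀⟩ := eventually_atTop.1 <|
    h.eventually (Icc_mem_nhds (by norm_num : (1 / 2 : ℝ) < 1) one_lt_two)
  refine ⟨max x₀ 0, le_max_right _ _, fun t ht => ?_⟩
  obtain ⟨hlo, hhi⟩ := hx₀ t (le_of_max_le_left ht)
  have hq := mul_pos hc (exp_pos (-lam * t))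
  rw [le_div_iff₀ hq] at hlo
  rw [div_le_iff₀ hq] at hhi
  constructor <;> linarith

lemma exists_forall_le_mul_exp {p : ℝ → ℝ} {x₀ c lam : ℝ} (hp : ∀ t, p t ≤ 1)
    (hlam : 0 ≤ lam)
    (h : ∀ t, x₀ ≤ t → p t ≤ c * exp (-lam * t)) :
    ∃ C, ∀ t, p t ≤ C * exp (-lam * t) := by
  refine ⟨max c (exp (lam * x₀)), fun t => ?_⟩
  rcases le_or_gt x₀ t with ht | ht
  · exact (h t ht).trans (by gcongr; exact le_max_left _ _)
  · calc p t ≤ exp (lam * x₀) * exp (-lam * x₀) := by rw [← exp_add]; simpa using hp t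
      _ ≤ max c (exp (lam * x₀)) * exp (-lam * t) :=
        mul_le_mul (le_max_right _ _) (exp_le_exp.2 (by nlinarith)) (exp_pos _).le
          ((exp_pos _).le.trans (le_max_right _ _))

theorem average_expected_maxima_exponential_tail_general
    {Ω : Type*} [MeasureSpace Ω] [IsProbabilityMeasure (ℙ : Measure Ω)]
    (c lam : ℝ) (hc : 0 < c) (hlam : 0 < lam)
    (φ : ℕ → Ω → ℝ)
    (hnonneg : ∀ i ω, 0 ≤ φ i ω)
    (hindep : iIndepFun φ ℙ)
    (hident : ∀ i, IdentDistrib (φ i) (φ 0) ℙ ℙ)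
    (htail : Tendsto
      (fun x : ℝ => (ℙ {ω | φ 0 ω > x}).toReal / (c * Real.exp (-lam * x)))
      atTop (𝓝 1)) :
    Tendsto (fun n : ℕ =>
        ((n : ℝ)⁻¹ * ∑ k ∈ Finset.Icc 1 n, ∫ ω, ⨆ i : Fin k, φ (i : ℕ) ω) /
          (Real.log n / lam))
      atTop (𝓝 1) := by
  obtain ⟨x₀, hx₀, hbounds⟩ := exists_bounds_of_tendsto_div_mul_exp hc htail
  obtain ⟨C, hC⟩ := exists_forall_le_mul_exp (p := fun t => (ℙ {ω | t < φ 0 ω}).toReal)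
    (fun _ => measureReal_le_one) hlam.le fun t ht => (hbounds t ht).2
  have hident' (k : ℕ) (i : Fin k) : IdentDistrib (φ i) (φ 0) ℙ ℙ := hident i
  have hnonneg' (k : ℕ) (i : Fin k) : 0 ≤ᵐ[ℙ] φ i := ae_of_all _ (hnonneg i)
  refine tendsto_div_nhds_one_of_bounds (g := fun n : ℕ => log n / lam)
    ((tendsto_log_atTop.comp tendsto_natCast_atTop_atTop).atTop_div_const hlam)
    ⟨C / lam, ?_⟩ fun a ha => ?_
  · filter_upwards [eventually_ne_atTop 0] with n hn
    refine (inv_mul_sum_Icc_le (b := C / lam) (one_div_pos.2 hlam).le (fun k hk => ?_)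
      hn).trans_eq (by ring)
    have : NeZero k := ⟨by omega⟩
    exact (integral_iSup_le_of_measureReal_lt_le_exp (hident' k) (hnonneg' k) hlam hC).trans_eq
      (by rw [Fintype.card_fin]; ring)
  · set β := a * (log (-log (1 - a) / (c / 2)) / lam + x₀)
    refine ⟨a / lam + β, ?_⟩
    filter_upwards [eventually_ne_atTop 0] with n hn
    refine (le_inv_mul_sum_Icc (b := -β) (div_pos ha.1 hlam).le (fun k hk => ?_) hn).trans_eq'
      (by ring)
    have : NeZero k := ⟨by omega⟩
    have hM := integrable_iSup_of_measureReal_lt_le_exp (hident' k) (hnonneg' k) hlam hC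
    exact (le_integral_iSup_of_mul_exp_le_measureReal (hindep.precomp Fin.val_injective)
      (hident' k) (hnonneg' k) hM (half_pos hc) hlam hx₀ (fun t ht => (hbounds t ht).1)
      ha).trans_eq' (by rw [Fintype.card_fin]; ring)

/-- Fix `λ > 0`, `c > 0`. Let `φ_{(k:k)}` denote the maximum of `k`
i.i.d. nonnegative random variables with finite mean and distribution having an
exponential tail `(c, λ)`, and let `Φ_n = (1/n) Σ_{k=1}^n E[φ_{(k:k)}]`. Then
`Φ_n / (ln n / λ) → 1`. -/
theorem average_expected_maxima_exponential_tail
    {Ω : Type*} [MeasureSpace Ω] [IsProbabilityMeasure (ℙ : Measure Ω)]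
    (c lam : ℝ) (hc : 0 < c) (hlam : 0 < lam)
    (φ : ℕ → Ω → ℝ) (hmeas : ∀ i, Measurable (φ i))
    (hnonneg : ∀ i ω, 0 ≤ φ i ω)
    (hint : Integrable (φ 0) ℙ)
    (hindep : iIndepFun φ ℙ)
    (hident : ∀ i, IdentDistrib (φ i) (φ 0) ℙ ℙ)
    (htail : Tendsto
      (fun x : ℝ => (ℙ {ω | φ 0 ω > x}).toReal / (c * Real.exp (-lam * x)))
      atTop (𝓝 1)) :
    Tendsto (fun n : ℕ =>
        ((n : ℝ)⁻¹ * ∑ k ∈ Finset.Icc 1 n, ∫ ω, ⨆ i : Fin k, φ (i : ℕ) ω) /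
          (Real.log n / lam))
      atTop (𝓝 1) :=
  average_expected_maxima_exponential_tail_general c lam hc hlam φ hnonneg hindep hident htail
end

section
/- Fix ρ ∈ (0,1). Let X and Y be independent nonnegative random variables with finite means, where X has an exponential tail with parameters (c_X, λ_X) and Y has an exponential tail with parameters (c_Y, λ_Y). Let Z = (1−ρ)X + ρY and let Z_{(n:n)} be the maximum of n i.i.d. copies of Z. Then lim_{n→∞} E[Z_{(n:n)}] / ln n = max{(1−ρ)/λ_X, ρ/λ_Y}. -/
/-!
Put `W = (1 - ρ) X + ρ Y` and `λ = min (λ_X / (1 - ρ)) (λ_Y / ρ)`, so that the claimed limit is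
`1 / λ`: the summands have exponential tails of rates `λ_X / (1 - ρ)` and `λ_Y / ρ`.

Upper bound: for `0 < s < λ` both summands have finite exponential moments at `s` (layer-cake
formula), hence so does `W` by independence, and Jensen's inequality for `exp` together with
`exp (s max Zᵢ) ≤ ∑ exp (s Zᵢ)` gives `s E[max_{i<n} Zᵢ] ≤ log n + log E[exp (s W)]`.

Lower bound: the heavier of the two tails gives `P(W > x) ≥ c exp (-λ x)` for large `x`. For
`a < 1 / λ` independence gives
`P(max_{i<n} Zᵢ > a log n) = 1 - (1 - P(W > a log n))ⁿ ≥ 1 - exp (-c n^{1 - aλ}) → 1`,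
and Markov's inequality gives `E[max_{i<n} Zᵢ] ≥ a log n (1 - o(1))`.
-/

open MeasureTheory ProbabilityTheory Filter Topology Set Real

lemma tendsto_div_of_eventually_mul_le {α : Type*} {l : Filter α} {f g : α → ℝ} {L : ℝ}
    (hg : Tendsto g l atTop) (hlow : ∀ b < L, ∀ᶠ x in l, b * g x ≤ f x)
    (hup : ∀ b > L, ∀ᶠ x in l, f x ≤ b * g x) : Tendsto (fun x => f x / g x) l (𝓝 L) := by
  refine tendsto_order.2 ⟨fun b hb => ?_, fun b hb => ?_⟩
  · obtain ⟨b', hbb', hb'L⟩ := exists_between hb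
    filter_upwards [hlow b' hb'L, hg.eventually_gt_atTop 0] with x hx hgx
    exact hbb'.trans_le ((le_div_iff₀ hgx).2 hx)
  · obtain ⟨b', hLb', hb'b⟩ := exists_between hb
    filter_upwards [hup b' hLb', hg.eventually_gt_atTop 0] with x hx hgx
    exact ((div_le_iff₀ hgx).2 hx).trans_lt hb'b

lemma apply_ciSup_le_sum {ι : Type*} [Fintype ι] [Nonempty ι] {g : ℝ → ℝ} (hg : ∀ x, 0 ≤ g x)
    (f : ι → ℝ) : g (⨆ i, f i) ≤ ∑ i, g (f i) := by
  obtain ⟨j, hj⟩ := exists_eq_ciSup_of_finite (f := f)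
  rw [← hj]
  exact Finset.single_le_sum (f := fun i => g (f i)) (fun i _ => hg _) (Finset.mem_univ j)

lemma integral_mul_exp_mul (t x : ℝ) : ∫ u in (0)..x, t * exp (t * u) = exp (t * x) - 1 := by
  rw [intervalIntegral.integral_eq_sub_of_hasDerivAt (f := fun u => exp (t * u))
    (fun u _ => by simpa [mul_comm] using ((hasDerivAt_id u).const_mul t).exp)
    ((by fun_prop : Continuous fun u => t * exp (t * u)).intervalIntegrable _ _)]
  simp

namespace MeasureTheory

variable {Ω : Type*} [MeasurableSpace Ω] {μ : Measure Ω}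

lemma integrable_iSup {ι : Type*} [Fintype ι] [Nonempty ι] {Z : ι → Ω → ℝ}
    (hZm : ∀ i, Measurable (Z i)) (hZ : ∀ i, Integrable (Z i) μ) :
    Integrable (fun ω => ⨆ i, Z i ω) μ :=
  (integrable_finsetSum _ fun i _ => (hZ i).abs).mono' (Measurable.iSup hZm).aestronglyMeasurable
    (.of_forall fun _ => apply_ciSup_le_sum (g := abs) abs_nonneg _)

end MeasureTheory

namespace ProbabilityTheory

def HasExpTail {Ω : Type*} [MeasurableSpace Ω] (μ : Measure Ω) (X : Ω → ℝ) (c lam : ℝ) : Prop :=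
  Tendsto (fun x => μ.real {ω | x < X ω} / (c * exp (-lam * x))) atTop (𝓝 1)

section Tail

variable {Ω : Type*} [MeasurableSpace Ω] {μ : Measure Ω} {X : Ω → ℝ} {c lam : ℝ}

lemma integrable_exp_mul_of_measureReal_lt_le [IsFiniteMeasure μ] {C t : ℝ}
    (hX0 : 0 ≤ᵐ[μ] X) (hXm : AEMeasurable X μ)
    (htail : ∀ x, μ.real {ω | x < X ω} ≤ C * exp (-lam * x)) (ht0 : 0 ≤ t) (ht : t < lam) :
    Integrable (fun ω => exp (t * X ω)) μ := by
  have hg : Continuous fun u => t * exp (t * u) := by fun_prop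
  have hlayer := lintegral_comp_eq_lintegral_meas_lt_mul μ hX0 hXm
    (fun _ _ => hg.intervalIntegrable _ _) (.of_forall fun _ => by positivity)
  simp only [integral_mul_exp_mul] at hlayer
  have hdom : IntegrableOn (fun u => C * t * exp (-(lam - t) * u)) (Ioi 0) :=
    (exp_neg_integrableOn_Ioi 0 (by linarith)).const_mul _
  have hfin : ∫⁻ ω, ENNReal.ofReal (exp (t * X ω) - 1) ∂μ < ⊤ := by
    rw [hlayer]
    refine (setLIntegral_mono' measurableSet_Ioi fun u _ => ?_).trans_lt hdom.lintegral_lt_top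
    rw [← ENNReal.ofReal_toReal (measure_ne_top μ _), ← ENNReal.ofReal_mul ENNReal.toReal_nonneg]
    refine ENNReal.ofReal_le_ofReal ?_
    calc μ.real {ω | u < X ω} * (t * exp (t * u)) ≤ C * exp (-lam * u) * (t * exp (t * u)) :=
          mul_le_mul_of_nonneg_right (htail u) (by positivity)
      _ = C * t * exp (-(lam - t) * u) := by
          rw [mul_mul_mul_comm, ← exp_add]; ring_nf
  have hnonneg : 0 ≤ᵐ[μ] fun ω => exp (t * X ω) - 1 := by
    filter_upwards [hX0] with ω hω
    exact sub_nonneg.2 (one_le_exp (mul_nonneg ht0 hω))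
  have hsub : Integrable (fun ω => exp (t * X ω) - 1) μ :=
    ⟨by fun_prop, (hasFiniteIntegral_iff_ofReal hnonneg).2 hfin⟩
  exact (hsub.add (integrable_const 1)).congr (.of_forall fun _ => by simp)

namespace HasExpTail

lemma const_mul (h : HasExpTail μ X c lam) {a : ℝ} (ha : 0 < a) :
    HasExpTail μ (fun ω => a * X ω) c (lam / a) := by
  refine (h.comp (tendsto_id.atTop_div_const ha)).congr fun x => ?_
  simp only [Function.comp_apply, id, div_lt_iff₀' ha]
  congr 3
  field_simp

lemma exists_le [IsFiniteMeasure μ] (h : HasExpTail μ X c lam) (hc : 0 < c) (hlam : 0 ≤ lam) :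
    ∃ C, ∀ x, μ.real {ω | x < X ω} ≤ C * exp (-lam * x) := by
  obtain ⟨B, hB⟩ := eventually_atTop.mp (h.eventually_le_const (by norm_num : (1 : ℝ) < 2))
  refine ⟨max (2 * c) (μ.real univ * exp (lam * B)), fun x => ?_⟩
  rcases le_total B x with hx | hx
  · have := hB x hx
    rw [div_le_iff₀ (by positivity)] at this
    nlinarith [le_max_left (2 * c) (μ.real univ * exp (lam * B)), exp_pos (-lam * x)]
  · calc μ.real {ω | x < X ω} ≤ μ.real univ * exp (lam * B) * exp (-lam * x) := by
          rw [mul_assoc, ← exp_add]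
          refine (measureReal_mono (subset_univ _)).trans ?_
          exact le_mul_of_one_le_right measureReal_nonneg (one_le_exp (by nlinarith))
      _ ≤ _ := mul_le_mul_of_nonneg_right (le_max_right _ _) (exp_pos _).le

lemma integrable_exp_mul [IsFiniteMeasure μ] (h : HasExpTail μ X c lam) (hc : 0 < c)
    (hX0 : 0 ≤ᵐ[μ] X) (hXm : AEMeasurable X μ) {t : ℝ} (ht0 : 0 ≤ t) (ht : t < lam) :
    Integrable (fun ω => exp (t * X ω)) μ :=
  have ⟨_, hC⟩ := h.exists_le hc (ht0.trans ht.le)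
  integrable_exp_mul_of_measureReal_lt_le hX0 hXm hC ht0 ht

lemma eventually_le_measureReal_lt [IsFiniteMeasure μ] (h : HasExpTail μ X c lam) (hc : 0 < c)
    {W : Ω → ℝ} (hXW : ∀ ω, X ω ≤ W ω) :
    ∀ᶠ x in atTop, c / 2 * exp (-lam * x) ≤ μ.real {ω | x < W ω} := by
  filter_upwards [h.eventually_const_le (by norm_num : (1 / 2 : ℝ) < 1)] with x hx
  rw [le_div_iff₀ (by positivity)] at hx
  exact (by linarith : c / 2 * exp (-lam * x) ≤ μ.real {ω | x < X ω}).trans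
    (measureReal_mono fun ω (hω : x < X ω) => hω.trans_le (hXW ω))

lemma exists_eventually_le_measureReal_lt_add [IsFiniteMeasure μ] {Y : Ω → ℝ} {c' lam' : ℝ}
    (hX : HasExpTail μ X c lam) (hY : HasExpTail μ Y c' lam') (hc : 0 < c) (hc' : 0 < c')
    (hX0 : ∀ ω, 0 ≤ X ω) (hY0 : ∀ ω, 0 ≤ Y ω) :
    ∃ c'' > 0, ∀ᶠ x in atTop, c'' * exp (-min lam lam' * x) ≤ μ.real {ω | x < X ω + Y ω} := by
  rcases le_total lam lam' with h | h
  · rw [min_eq_left h]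
    exact ⟨_, by positivity,
      hX.eventually_le_measureReal_lt hc fun ω => le_add_of_nonneg_right (hY0 ω)⟩
  · rw [min_eq_right h]
    exact ⟨_, by positivity,
      hY.eventually_le_measureReal_lt hc' fun ω => le_add_of_nonneg_left (hX0 ω)⟩

end HasExpTail

end Tail

section Maximum

variable {Ω : Type*} [MeasurableSpace Ω] {μ : Measure Ω}

lemma mul_integral_iSup_le_log_sum_mgf [IsProbabilityMeasure μ] {ι : Type*} [Fintype ι]
    [Nonempty ι] {Z : ι → Ω → ℝ} (hZm : ∀ i, Measurable (Z i)) (hZ : ∀ i, Integrable (Z i) μ)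
    {s : ℝ} (hexp : ∀ i, Integrable (fun ω => exp (s * Z i ω)) μ) :
    s * ∫ ω, ⨆ i, Z i ω ∂μ ≤ log (∑ i, mgf (Z i) μ s) := by
  have hsum : Integrable (fun ω => ∑ i, exp (s * Z i ω)) μ :=
    integrable_finsetSum _ fun i _ => hexp i
  have hle : ∀ ω, exp (s * ⨆ i, Z i ω) ≤ ∑ i, exp (s * Z i ω) :=
    fun ω => apply_ciSup_le_sum (g := fun x => exp (s * x)) (fun _ => (exp_pos _).le) _
  have hexpM : Integrable (fun ω => exp (s * ⨆ i, Z i ω)) μ :=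
    hsum.mono' ((Measurable.iSup hZm).const_mul s).exp.aestronglyMeasurable
      (.of_forall fun ω => by simpa only [norm_eq_abs, abs_exp] using hle ω)
  have hjensen : exp (s * ∫ ω, ⨆ i, Z i ω ∂μ) ≤ ∫ ω, exp (s * ⨆ i, Z i ω) ∂μ := by
    rw [← integral_const_mul]
    exact convexOn_exp.map_integral_le continuous_exp.continuousOn isClosed_univ
      (.of_forall fun _ => mem_univ _) ((integrable_iSup hZm hZ).const_mul s) hexpM
  have hint : ∫ ω, exp (s * ⨆ i, Z i ω) ∂μ ≤ ∑ i, mgf (Z i) μ s := by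
    simp only [mgf]
    rw [← integral_finsetSum _ fun i _ => hexp i]
    exact integral_mono_of_nonneg (.of_forall fun _ => (exp_pos _).le) hsum (.of_forall hle)
  exact (le_log_iff_exp_le ((exp_pos _).trans_le (hjensen.trans hint))).2 (hjensen.trans hint)

variable {Z : ℕ → Ω → ℝ} {W : Ω → ℝ}

lemma mul_integral_iSup_le_log_add [IsProbabilityMeasure μ] (hZm : ∀ i, Measurable (Z i))
    (hident : ∀ i, IdentDistrib (Z i) W μ μ) (hW : Integrable W μ) {s : ℝ}
    (hexp : Integrable (fun ω => exp (s * W ω)) μ) {n : ℕ} (hn : n ≠ 0) :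
    s * ∫ ω, ⨆ i : Fin n, Z i ω ∂μ ≤ log n + log (mgf W μ s) := by
  have : NeZero n := ⟨hn⟩
  have hexpZ : ∀ i, Integrable (fun ω => exp (s * Z i ω)) μ := fun i =>
    ((hident i).comp (by fun_prop : Measurable fun x => exp (s * x))).integrable_iff.mpr hexp
  convert mul_integral_iSup_le_log_sum_mgf (fun i : Fin n => hZm i)
    (fun i => (hident i).integrable_iff.mpr hW) (fun i => hexpZ i) using 1
  simp only [fun i => mgf_congr_identDistrib (hident i), Finset.sum_const, Finset.card_univ,
    Fintype.card_fin, nsmul_eq_mul]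
  rw [log_mul (by exact_mod_cast hn) (mgf_pos hexp).ne']

lemma measure_iSup_le_eq_pow (hindep : iIndepFun Z μ) (hident : ∀ i, IdentDistrib (Z i) W μ μ)
    {n : ℕ} (hn : n ≠ 0) (t : ℝ) : μ {ω | ⨆ i : Fin n, Z i ω ≤ t} = μ {ω | W ω ≤ t} ^ n := by
  have : NeZero n := ⟨hn⟩
  have hset : {ω | ⨆ i : Fin n, Z i ω ≤ t} = ⋂ i ∈ Finset.range n, Z i ⁻¹' Iic t := by
    ext ω
    simp only [mem_ofPred_eq, ciSup_le_iff (finite_range _).bddAbove, mem_iInter,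
      Finset.mem_range, mem_preimage, mem_Iic, Fin.forall_iff]
  rw [hset, hindep.measure_inter_preimage_eq_mul _ fun i _ => measurableSet_Iic,
    Finset.prod_congr rfl fun i _ => (hident i).measure_mem_eq measurableSet_Iic,
    Finset.prod_const, Finset.card_range]
  rfl

lemma one_sub_exp_le_measureReal_lt_iSup [IsProbabilityMeasure μ] (hZm : ∀ i, Measurable (Z i))
    (hindep : iIndepFun Z μ) (hident : ∀ i, IdentDistrib (Z i) W μ μ) (hWm : Measurable W)
    {n : ℕ} (hn : n ≠ 0) (t : ℝ) :
    1 - exp (-(n * μ.real {ω | t < W ω})) ≤ μ.real {ω | t < ⨆ i : Fin n, Z i ω} := by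
  set p := μ.real {ω | t < W ω}
  have hW : μ.real {ω | W ω ≤ t} = 1 - p := by
    rw [← probReal_compl_eq_one_sub (measurableSet_lt measurable_const hWm)]
    simp only [compl_ofPred, not_lt]
  have hmax : μ.real {ω | ⨆ i : Fin n, Z i ω ≤ t} = (1 - p) ^ n := by
    rw [← hW, measureReal_def, measureReal_def, measure_iSup_le_eq_pow hindep hident hn,
      ENNReal.toReal_pow]
  have hp : (1 - p) ^ n ≤ exp (-(n * p)) := by
    rw [neg_mul_eq_mul_neg, exp_nat_mul]
    exact pow_le_pow_left₀ (by linarith [measureReal_le_one (μ := μ) (s := {ω | t < W ω})])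
      (by linarith [add_one_le_exp (-p)]) n
  calc 1 - exp (-(n * p)) ≤ 1 - μ.real {ω | ⨆ i : Fin n, Z i ω ≤ t} := by linarith
    _ = μ.real {ω | t < ⨆ i : Fin n, Z i ω} := by
      rw [← probReal_compl_eq_one_sub
        (measurableSet_le (Measurable.iSup fun i : Fin n => hZm i) measurable_const)]
      simp only [compl_ofPred, not_le]

lemma tendsto_measureReal_lt_iSup [IsProbabilityMeasure μ] (hZm : ∀ i, Measurable (Z i))
    (hindep : iIndepFun Z μ) (hident : ∀ i, IdentDistrib (Z i) W μ μ) (hWm : Measurable W)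
    {c lam a : ℝ} (hc : 0 < c) (hlow : ∀ᶠ x in atTop, c * exp (-lam * x) ≤ μ.real {ω | x < W ω})
    (ha : 0 < a) (hal : a * lam < 1) :
    Tendsto (fun n : ℕ => μ.real {ω | a * log n < ⨆ i : Fin n, Z i ω}) atTop (𝓝 1) := by
  have hlog : Tendsto (fun n : ℕ => log n) atTop atTop :=
    tendsto_log_atTop.comp tendsto_natCast_atTop_atTop
  have hgrow : Tendsto (fun n : ℕ => c * exp ((1 - a * lam) * log n)) atTop atTop :=
    (tendsto_exp_atTop.comp (hlog.const_mul_atTop (by linarith))).const_mul_atTop hc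
  have hlim : Tendsto (fun n : ℕ => 1 - exp (-(c * exp ((1 - a * lam) * log n)))) atTop (𝓝 1) := by
    simpa using (tendsto_exp_atBot.comp (tendsto_neg_atTop_atBot.comp hgrow)).const_sub 1
  refine tendsto_of_tendsto_of_tendsto_of_le_of_le' hlim tendsto_const_nhds ?_
    (.of_forall fun n => measureReal_le_one)
  filter_upwards [eventually_ne_atTop 0, (hlog.const_mul_atTop ha).eventually hlow] with n hn hp
  refine le_trans ?_ (one_sub_exp_le_measureReal_lt_iSup hZm hindep hident hWm hn _)
  have hn0 : (0 : ℝ) < n := by exact_mod_cast Nat.pos_of_ne_zero hn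
  have hnp : c * exp ((1 - a * lam) * log n) ≤ n * μ.real {ω | a * log n < W ω} := by
    calc c * exp ((1 - a * lam) * log n) = n * (c * exp (-lam * (a * log n))) := by
          rw [show (1 - a * lam) * log n = log n + -lam * (a * log n) by ring, exp_add,
            exp_log hn0]
          ring
      _ ≤ _ := mul_le_mul_of_nonneg_left hp hn0.le
  gcongr

lemma eventually_mul_log_le_integral_iSup [IsProbabilityMeasure μ] (hZm : ∀ i, Measurable (Z i))
    (hindep : iIndepFun Z μ) (hident : ∀ i, IdentDistrib (Z i) W μ μ) (hWm : Measurable W)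
    (hW0 : 0 ≤ᵐ[μ] W) (hW : Integrable W μ) {c lam b : ℝ} (hlam : 0 < lam) (hc : 0 < c)
    (hlow : ∀ᶠ x in atTop, c * exp (-lam * x) ≤ μ.real {ω | x < W ω}) (hb : b < lam⁻¹) :
    ∀ᶠ n : ℕ in atTop, b * log n ≤ ∫ ω, ⨆ i : Fin n, Z i ω ∂μ := by
  obtain ⟨a, hba, hal⟩ := exists_between (max_lt hb (inv_pos.2 hlam))
  have ha : 0 < a := (le_max_right _ _).trans_lt hba
  have hba : b / a < 1 := (div_lt_one ha).2 ((le_max_left _ _).trans_lt hba)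
  have hal : a * lam < 1 := (lt_div_iff₀ hlam).1 (by rwa [one_div])
  have hlog : Tendsto (fun n : ℕ => log n) atTop atTop :=
    tendsto_log_atTop.comp tendsto_natCast_atTop_atTop
  filter_upwards [eventually_ne_atTop 0, hlog.eventually_ge_atTop 0,
    (tendsto_measureReal_lt_iSup hZm hindep hident hWm hc hlow ha hal).eventually_const_lt hba]
    with n hn hlogn hP
  have : NeZero n := ⟨hn⟩
  have hM0 : 0 ≤ᵐ[μ] fun ω => ⨆ i : Fin n, Z i ω := by
    filter_upwards [(hident 0).symm.ae_snd measurableSet_Ici hW0] with ω hω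
    exact hω.trans (le_ciSup (f := fun i : Fin n => Z i ω) (finite_range _).bddAbove 0)
  rw [div_lt_iff₀ ha] at hP
  calc b * log n ≤ a * log n * μ.real {ω | a * log n < ⨆ i : Fin n, Z i ω} := by nlinarith
    _ ≤ a * log n * μ.real {ω | a * log n ≤ ⨆ i : Fin n, Z i ω} :=
      mul_le_mul_of_nonneg_left (measureReal_mono (ofPred_subset_ofPred.2 fun _ => le_of_lt))
        (by positivity)
    _ ≤ ∫ ω, ⨆ i : Fin n, Z i ω ∂μ := mul_meas_ge_le_integral_of_nonneg hM0
      (integrable_iSup (fun i => hZm i) fun i => (hident i).integrable_iff.2 hW) _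

lemma eventually_integral_iSup_le_mul_log [IsProbabilityMeasure μ] (hZm : ∀ i, Measurable (Z i))
    (hident : ∀ i, IdentDistrib (Z i) W μ μ) (hW : Integrable W μ) {lam b : ℝ} (hlam : 0 < lam)
    (hexp : ∀ s, 0 < s → s < lam → Integrable (fun ω => exp (s * W ω)) μ) (hb : lam⁻¹ < b) :
    ∀ᶠ n : ℕ in atTop, ∫ ω, ⨆ i : Fin n, Z i ω ∂μ ≤ b * log n := by
  have hb0 : 0 < b := (inv_pos.2 hlam).trans hb
  obtain ⟨s, hbs, hsl⟩ := exists_between (inv_lt_of_inv_lt₀ hlam hb)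
  have hs : 0 < s := (inv_pos.2 hb0).trans hbs
  have hsb : 1 < s * b := (inv_lt_iff_one_lt_mul₀ hb0).1 hbs
  have hlog : Tendsto (fun n : ℕ => log n) atTop atTop :=
    tendsto_log_atTop.comp tendsto_natCast_atTop_atTop
  filter_upwards [eventually_ne_atTop 0,
    hlog.eventually_ge_atTop (log (mgf W μ s) / (s * b - 1))] with n hn hlogn
  have hE := mul_integral_iSup_le_log_add hZm hident hW (hexp s hs hsl) hn
  rw [div_le_iff₀ (by linarith)] at hlogn
  nlinarith

theorem tendsto_integral_iSup_div_log [IsProbabilityMeasure μ] (hZm : ∀ i, Measurable (Z i))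
    (hindep : iIndepFun Z μ) (hident : ∀ i, IdentDistrib (Z i) W μ μ) (hWm : Measurable W)
    (hW0 : 0 ≤ᵐ[μ] W) (hW : Integrable W μ) {c lam : ℝ} (hlam : 0 < lam)
    (hexp : ∀ s, 0 < s → s < lam → Integrable (fun ω => exp (s * W ω)) μ) (hc : 0 < c)
    (hlow : ∀ᶠ x in atTop, c * exp (-lam * x) ≤ μ.real {ω | x < W ω}) :
    Tendsto (fun n : ℕ => (∫ ω, ⨆ i : Fin n, Z i ω ∂μ) / log n) atTop (𝓝 lam⁻¹) :=
  tendsto_div_of_eventually_mul_le (tendsto_log_atTop.comp tendsto_natCast_atTop_atTop)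
    (fun _ hb => eventually_mul_log_le_integral_iSup hZm hindep hident hWm hW0 hW hlam hc hlow hb)
    (fun _ hb => eventually_integral_iSup_le_mul_log hZm hident hW hlam hexp hb)

end Maximum

end ProbabilityTheory

/-- Fix `ρ ∈ (0,1)`. Let `X` and `Y` be independent nonnegative
random variables with finite means, with exponential tails `(c_X, λ_X)` and
`(c_Y, λ_Y)` respectively. Let `Z = (1−ρ)X + ρY` and `Z_{(n:n)}` be the maximum of
`n` i.i.d. copies of `Z`. Then `E[Z_{(n:n)}] / ln n → max{(1−ρ)/λ_X, ρ/λ_Y}`. -/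
theorem expected_maximum_convex_combination_exponential_tails
    {Ω : Type*} [MeasureSpace Ω] [IsProbabilityMeasure (ℙ : Measure Ω)]
    (ρ : ℝ) (hρ : ρ ∈ Set.Ioo (0 : ℝ) 1)
    (cX lamX cY lamY : ℝ) (hcX : 0 < cX) (hlamX : 0 < lamX)
    (hcY : 0 < cY) (hlamY : 0 < lamY)
    (X Y : Ω → ℝ) (hXmeas : Measurable X) (hYmeas : Measurable Y)
    (hXnonneg : ∀ ω, 0 ≤ X ω) (hYnonneg : ∀ ω, 0 ≤ Y ω)
    (hXint : Integrable X ℙ) (hYint : Integrable Y ℙ)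
    (hindep : IndepFun X Y ℙ)
    (hXtail : Tendsto
      (fun x : ℝ => (ℙ {ω | X ω > x}).toReal / (cX * Real.exp (-lamX * x)))
      atTop (𝓝 1))
    (hYtail : Tendsto
      (fun x : ℝ => (ℙ {ω | Y ω > x}).toReal / (cY * Real.exp (-lamY * x)))
      atTop (𝓝 1))
    (Z : ℕ → Ω → ℝ) (hZmeas : ∀ i, Measurable (Z i))
    (hZindep : iIndepFun Z ℙ)
    (hZident : ∀ i, IdentDistrib (Z i) (fun ω => (1 - ρ) * X ω + ρ * Y ω) ℙ ℙ) :
    Tendsto (fun n : ℕ => (∫ ω, ⨆ i : Fin n, Z (i : ℕ) ω) / Real.log n)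
      atTop (𝓝 (max ((1 - ρ) / lamX) (ρ / lamY))) := by
  obtain ⟨hρ0, hρ1⟩ := hρ
  have h1ρ : 0 < 1 - ρ := sub_pos.2 hρ1
  have hA : HasExpTail ℙ (fun ω => (1 - ρ) * X ω) cX (lamX / (1 - ρ)) :=
    HasExpTail.const_mul hXtail h1ρ
  have hB : HasExpTail ℙ (fun ω => ρ * Y ω) cY (lamY / ρ) := HasExpTail.const_mul hYtail hρ0
  have hA0 : ∀ ω, 0 ≤ (1 - ρ) * X ω := fun ω => mul_nonneg h1ρ.le (hXnonneg ω)
  have hB0 : ∀ ω, 0 ≤ ρ * Y ω := fun ω => mul_nonneg hρ0.le (hYnonneg ω)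
  have hr1 : 0 < lamX / (1 - ρ) := div_pos hlamX h1ρ
  have hr2 : 0 < lamY / ρ := div_pos hlamY hρ0
  have hmax : max ((1 - ρ) / lamX) (ρ / lamY) = (min (lamX / (1 - ρ)) (lamY / ρ))⁻¹ := by
    rw [← inv_div, ← inv_div lamY]
    rcases le_total (lamX / (1 - ρ)) (lamY / ρ) with h | h
    · rw [min_eq_left h, max_eq_left ((inv_le_inv₀ hr2 hr1).2 h)]
    · rw [min_eq_right h, max_eq_right ((inv_le_inv₀ hr1 hr2).2 h)]
  obtain ⟨c, hc, hlow⟩ := hA.exists_eventually_le_measureReal_lt_add hB hcX hcY hA0 hB0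
  rw [hmax]
  refine tendsto_integral_iSup_div_log hZmeas hZindep hZident (by fun_prop)
    (.of_forall fun ω => add_nonneg (hA0 ω) (hB0 ω)) ((hXint.const_mul _).add (hYint.const_mul _))
    (lt_min hr1 hr2) (fun s hs hsl => ?_) hc hlow
  exact (hindep.comp (measurable_const_mul _) (measurable_const_mul _)).integrable_exp_mul_add
    (hA.integrable_exp_mul hcX (.of_forall hA0) (by fun_prop) hs.le
      (hsl.trans_le (min_le_left _ _)))
    (hB.integrable_exp_mul hcY (.of_forall hB0) (by fun_prop) hs.le
      (hsl.trans_le (min_le_right _ _)))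
end
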